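/- arXiv:math/0612326 — 5 statements merged into one kernel-verified Lean document; each statement's English description precedes it below -/
import Mathlib

section
/- For a point X inside or on the boundary of a triangle ABC, define P(A,X), P(B,X), P(C,X) as the areas of the three regions into which the perpendiculars dropped from X to the three sides (lines BC, CA, AB respectively, extended within the triangle) divide the triangle, where P(V,X) is the area of the region containing vertex V. Then the functions X ↦ P(A,X), X ↦ P(B,X), X ↦ P(C,X) are continuous on the triangle ABC. -/
open MeasureTheory Real EuclideanGeometry Filter Topology
open scoped RealInnerProductSpace

def tri (A B C : EuclideanSpace ℝ (Fin 2)) : Set (EuclideanSpace ℝ (Fin 2)) :=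
  convexHull ℝ {A, B, C}

/-- The region of the Steinhaus partition of triangle `ABC` (determined by the
perpendiculars through `X` to the side lines) that contains the vertex `A`. -/
def steinRegion (A B C X : EuclideanSpace ℝ (Fin 2)) : Set (EuclideanSpace ℝ (Fin 2)) :=
  tri A B C ∩ {Y | (inner ℝ (Y - X) (B - A) : ℝ) ≤ 0 ∧ (inner ℝ (Y - X) (C - A) : ℝ) ≤ 0}

/-- `sP A B C X` is the area of the Steinhaus region at vertex `A`;
the areas at `B` and `C` are `sP B A C X` and `sP C A B X`. -/
noncomputable def sP (A B C X : EuclideanSpace ℝ (Fin 2)) : ℝ :=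
  (volume (steinRegion A B C X)).toReal

noncomputable def triArea (A B C : EuclideanSpace ℝ (Fin 2)) : ℝ :=
  (volume (tri A B C)).toReal

def Acute (A B C : EuclideanSpace ℝ (Fin 2)) : Prop :=
  ∠ B A C < π/2 ∧ ∠ A B C < π/2 ∧ ∠ B C A < π/2

/-! The region at `A` is the triangle intersected with the translate by `X` of a fixed cone, an
intersection of two closed half-planes. For every point `Y` off the translated boundary lines of
the cone, whether `Y` lies in the region is locally constant in `X`; those lines are Lebesgue-null,
so dominated convergence makes the area continuous in `X`, on the whole plane. -/

open Filter Topology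

theorem eventually_mem_iff_of_notMem_frontier {X : Type*} [TopologicalSpace X] {s : Set X}
    {x : X} (hx : x ∉ frontier s) : ∀ᶠ y in 𝓝 x, (y ∈ s ↔ x ∈ s) := by
  rw [← Set.mem_compl_iff, compl_frontier_eq_union_interior] at hx
  rcases hx with hs | hs
  · filter_upwards [mem_interior_iff_mem_nhds.mp hs] with y hy
    exact iff_of_true hy (interior_subset hs)
  · filter_upwards [mem_interior_iff_mem_nhds.mp hs] with y hy
    exact iff_of_false hy (interior_subset hs)

theorem measure_frontier_inter_eq_zero {X : Type*} [TopologicalSpace X] [MeasurableSpace X]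
    {μ : Measure X} {s t : Set X} (hs : μ (frontier s) = 0) (ht : μ (frontier t) = 0) :
    μ (frontier (s ∩ t)) = 0 :=
  measure_mono_null ((frontier_inter_subset s t).trans
    (Set.union_subset_union Set.inter_subset_left Set.inter_subset_right))
    (measure_union_null hs ht)

theorem continuous_measureReal_inter_preimage_sub {G : Type*} [AddGroup G] [TopologicalSpace G]
    [IsTopologicalAddGroup G] [FirstCountableTopology G] [MeasurableSpace G] [BorelSpace G]
    {μ : Measure G} [μ.IsAddRightInvariant] {K C : Set G} (hK : MeasurableSet K) (hKμ : μ K ≠ ⊤)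
    (hC : MeasurableSet C) (hCμ : μ (frontier C) = 0) :
    Continuous fun X => μ.real (K ∩ {Y | Y - X ∈ C}) := by
  have hmeas (X : G) : MeasurableSet (K ∩ {Y | Y - X ∈ C}) :=
    hK.inter (measurable_id.sub_const X hC)
  refine continuous_iff_continuousAt.mpr fun X₀ => ?_
  have hnull : μ ((· - X₀) ⁻¹' frontier C) = 0 := by
    simp_rw [sub_eq_add_neg, measure_preimage_add_right, hCμ]
  have hlim : ∀ᵐ Y ∂μ, ∀ᶠ X in 𝓝 X₀,
      (Y ∈ K ∩ {Y | Y - X ∈ C} ↔ Y ∈ K ∩ {Y | Y - X₀ ∈ C}) := by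
    filter_upwards [measure_eq_zero_iff_ae_notMem.mp hnull] with Y hY
    have hsub : Tendsto (fun X => Y - X) (𝓝 X₀) (𝓝 (Y - X₀)) :=
      tendsto_const_nhds.sub tendsto_id
    filter_upwards [hsub.eventually (eventually_mem_iff_of_notMem_frontier hY)] with X hX
    exact and_congr_right fun _ => hX
  refine (ENNReal.tendsto_toReal ?_).comp
    (tendsto_measure_of_ae_tendsto_indicator _ (hmeas X₀) hmeas hK hKμ
      (Eventually.of_forall fun _ => Set.inter_subset_left) hlim)
  exact ne_top_of_le_ne_top hKμ (measure_mono Set.inter_subset_left)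

theorem addHaar_frontier_setOf_inner_nonpos {E : Type*} [NormedAddCommGroup E]
    [InnerProductSpace ℝ E] [FiniteDimensional ℝ E] [MeasurableSpace E] [BorelSpace E]
    (μ : Measure E) [μ.IsAddHaarMeasure] (u : E) : μ (frontier {Z | ⟪Z, u⟫ ≤ 0}) = 0 := by
  rcases eq_or_ne u 0 with rfl | hu
  · simp
  have hyperplane : {Z | ⟪Z, u⟫ = 0} = ((ℝ ∙ u)ᗮ : Set E) :=
    Set.ext fun _ => Submodule.mem_orthogonal_singleton_iff_inner_left.symm
  refine measure_mono_null (frontier_le_subset_eq (continuous_id.inner continuous_const)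
    continuous_const) (hyperplane ▸ Measure.addHaar_submodule μ _ fun htop => hu ?_)
  rwa [Submodule.orthogonal_eq_top_iff, Submodule.span_singleton_eq_bot] at htop

theorem continuous_sP (A B C : EuclideanSpace ℝ (Fin 2)) : Continuous (sP A B C) := by
  have hcompact : IsCompact (tri A B C) := (Set.toFinite _).isCompact_convexHull ℝ
  have hclosed (u : EuclideanSpace ℝ (Fin 2)) : IsClosed {Z | ⟪Z, u⟫ ≤ 0} :=
    isClosed_le (continuous_id.inner continuous_const) continuous_const
  exact continuous_measureReal_inter_preimage_sub hcompact.measurableSet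
    hcompact.measure_ne_top ((hclosed _).inter (hclosed _)).measurableSet
    (measure_frontier_inter_eq_zero (addHaar_frontier_setOf_inner_nonpos volume (B - A))
      (addHaar_frontier_setOf_inner_nonpos volume (C - A)))

theorem stein_areas_continuousOn_general (A B C : EuclideanSpace ℝ (Fin 2)) :
    ContinuousOn (fun X => sP A B C X) (tri A B C) ∧
    ContinuousOn (fun X => sP B A C X) (tri A B C) ∧
    ContinuousOn (fun X => sP C A B X) (tri A B C) :=
  ⟨(continuous_sP A B C).continuousOn, (continuous_sP B A C).continuousOn,
    (continuous_sP C A B).continuousOn⟩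

theorem stein_areas_continuousOn (A B C : EuclideanSpace ℝ (Fin 2))
    (h : AffineIndependent ℝ ![A, B, C]) :
    ContinuousOn (fun X => sP A B C X) (tri A B C) ∧
    ContinuousOn (fun X => sP B A C X) (tri A B C) ∧
    ContinuousOn (fun X => sP C A B X) (tri A B C) :=
  stein_areas_continuousOn_general A B C
end

section
/- For every acute triangle ABC, the point X₀ inside the triangle for which the Steinhaus partition has all three areas equal to |△ABC|/3 is unique: if X ≠ X₀ is any other point of the triangle, then some area P(V,X) is strictly less than |△ABC|/3. -/
open MeasureTheory Real EuclideanGeometry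
open scoped RealInnerProductSpace

/-!
Through `X₀` the plane is covered by three closed cones, one per vertex `V`, consisting of the
points `Y` with `⟪Y - X₀, W - V⟫ ≤ 0` for both other vertices `W`; the Steinhaus region of `V`
at `X₀` is the part of the triangle in that cone. If `X` lies in the cone of `V`, both
half-planes bounding the region of `V` move inward when `X₀` is replaced by `X`, so the region
shrinks. It shrinks strictly: `X - X₀ ≠ 0` cannot be orthogonal to both sides at `V`, so an open
half-plane meeting the region at `X₀` is cut away, and that costs positive area because the
region is convex with nonempty interior. Hence `P(V, X) < P(V, X₀) = |ABC|/3`.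
-/

open scoped ENNReal

namespace Convex

variable {E : Type*} [NormedAddCommGroup E] [NormedSpace ℝ E] [MeasurableSpace E] [BorelSpace E]
  {s U : Set E}

theorem interior_nonempty_of_addHaar_pos [FiniteDimensional ℝ E] (μ : Measure E)
    [μ.IsAddHaarMeasure] (hs : Convex ℝ s) (h : 0 < μ s) : (interior s).Nonempty := by
  rw [hs.interior_nonempty_iff_affineSpan_eq_top]
  by_contra hspan
  exact h.ne' (measure_mono_null (subset_affineSpan ℝ s) (Measure.addHaar_affineSubspace μ _ hspan))

theorem measure_diff_lt (μ : Measure E) [μ.IsOpenPosMeasure] (hs : Convex ℝ s)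
    (hint : (interior s).Nonempty) (hfin : μ s ≠ ∞) (hU : IsOpen U) (hsU : (s ∩ U).Nonempty) :
    μ (s \ U) < μ s := by
  obtain ⟨p, hps, hpU⟩ := hsU
  have hp : p ∈ closure (interior s) := by
    rw [hs.closure_interior_eq_closure_of_nonempty_interior hint]
    exact subset_closure hps
  have hpos : 0 < μ (U ∩ interior s) :=
    (hU.inter isOpen_interior).measure_pos μ (mem_closure_iff.1 hp U hU hpU)
  calc μ (s \ U) < μ (s \ U) + μ (U ∩ interior s) :=
        ENNReal.lt_add_right (measure_ne_top_of_subset Set.sdiff_subset hfin) hpos.ne'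
    _ = μ (s \ U ∪ U ∩ interior s) :=
        (measure_union (Set.disjoint_sdiff_left.mono_right Set.inter_subset_left)
          (hU.inter isOpen_interior).measurableSet).symm
    _ ≤ μ s := measure_mono (Set.union_subset Set.sdiff_subset
        (Set.inter_subset_right.trans interior_subset))

end Convex

theorem eq_zero_of_inner_sub_eq_zero {E : Type*} [NormedAddCommGroup E] [InnerProductSpace ℝ E]
    {A B C d : E} (hspan : affineSpan ℝ {A, B, C} = ⊤) (hB : ⟪d, B - A⟫ = 0)
    (hC : ⟪d, C - A⟫ = 0) : d = 0 := by
  have hker : vectorSpan ℝ {A, B, C} ≤ LinearMap.ker (innerₛₗ ℝ d) := by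
    rw [vectorSpan_eq_span_vsub_set_right ℝ (Set.mem_insert A _), Submodule.span_le]
    rintro _ ⟨Y, hY, rfl⟩
    rcases hY with rfl | rfl | rfl <;> simp [hB, hC]
  rw [← direction_affineSpan, hspan, AffineSubspace.direction_top] at hker
  exact inner_self_eq_zero.1 (hker Submodule.mem_top)

section Steinhaus

variable {A B C X X₀ : EuclideanSpace ℝ (Fin 2)}

theorem isCompact_tri (A B C : EuclideanSpace ℝ (Fin 2)) : IsCompact (tri A B C) :=
  (Set.toFinite {A, B, C}).isCompact_convexHull (𝕜 := ℝ)

def steinCone (A B C X : EuclideanSpace ℝ (Fin 2)) : Set (EuclideanSpace ℝ (Fin 2)) :=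
  {Y | ⟪Y - X, B - A⟫ ≤ 0 ∧ ⟪Y - X, C - A⟫ ≤ 0}

theorem steinRegion_eq_inter (A B C X : EuclideanSpace ℝ (Fin 2)) :
    steinRegion A B C X = tri A B C ∩ steinCone A B C X := rfl

theorem tri_swap (A B C : EuclideanSpace ℝ (Fin 2)) : tri A C B = tri A B C := by
  rw [tri, tri, Set.pair_comm]

theorem steinCone_swap (A B C X : EuclideanSpace ℝ (Fin 2)) :
    steinCone A C B X = steinCone A B C X := by
  ext Y
  exact and_comm

theorem steinRegion_swap (A B C X : EuclideanSpace ℝ (Fin 2)) :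
    steinRegion A C B X = steinRegion A B C X := by
  rw [steinRegion_eq_inter, steinRegion_eq_inter, tri_swap, steinCone_swap]

/-- `Y` lies in the cone of a vertex `V` maximizing `⟪Y - X, V⟫`. -/
theorem mem_steinCone_or (A B C X Y : EuclideanSpace ℝ (Fin 2)) :
    Y ∈ steinCone A B C X ∨ Y ∈ steinCone B A C X ∨ Y ∈ steinCone C A B X := by
  simp only [steinCone, Set.mem_ofPred_eq, inner_sub_right, sub_nonpos]
  grind

theorem convex_steinCone (A B C X : EuclideanSpace ℝ (Fin 2)) : Convex ℝ (steinCone A B C X) := by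
  intro Y hY Z hZ a b ha hb hab
  have hsplit : a • Y + b • Z - X = a • (Y - X) + b • (Z - X) := by
    rw [smul_sub, smul_sub, sub_add_sub_comm, ← add_smul, hab, one_smul]
  simp only [steinCone, Set.mem_ofPred_eq, hsplit, inner_add_left, real_inner_smul_left]
  constructor
  · nlinarith [hY.1, hZ.1]
  · nlinarith [hY.2, hZ.2]

theorem convex_steinRegion (A B C X : EuclideanSpace ℝ (Fin 2)) :
    Convex ℝ (steinRegion A B C X) :=
  (convex_convexHull ℝ _).inter (convex_steinCone A B C X)

theorem triArea_pos (hspan : affineSpan ℝ {A, B, C} = ⊤) : 0 < triArea A B C := by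
  have hint : (interior (tri A B C)).Nonempty := by
    rwa [tri, (convex_convexHull ℝ _).interior_nonempty_iff_affineSpan_eq_top,
      affineSpan_convexHull]
  exact ENNReal.toReal_pos (Measure.measure_pos_of_nonempty_interior volume hint).ne'
    (isCompact_tri A B C).measure_lt_top.ne

theorem volume_steinRegion_ne_top (A B C X : EuclideanSpace ℝ (Fin 2)) :
    volume (steinRegion A B C X) ≠ ∞ :=
  measure_ne_top_of_subset Set.inter_subset_left (isCompact_tri A B C).measure_lt_top.ne

theorem volume_steinRegion_lt (hX₀ : X₀ ∈ tri A B C)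
    (hpos : 0 < volume (steinRegion A B C X₀)) (hX : X ∈ steinCone A B C X₀)
    (hB : ⟪X - X₀, B - A⟫ < 0) :
    volume (steinRegion A B C X) < volume (steinRegion A B C X₀) := by
  have hconv := convex_steinRegion A B C X₀
  have hsub : steinRegion A B C X ⊆ steinRegion A B C X₀ \ {Y | 0 < ⟪Y - X, B - A⟫} := by
    rintro Y ⟨hY, hYB, hYC⟩
    have hsplit : Y - X₀ = (Y - X) + (X - X₀) := by abel
    refine ⟨⟨hY, ?_, ?_⟩, not_lt.2 hYB⟩ <;> rw [hsplit, inner_add_left]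
    · linarith
    · linarith [hX.2]
  refine (measure_mono hsub).trans_lt (hconv.measure_diff_lt volume
    (hconv.interior_nonempty_of_addHaar_pos volume hpos) (volume_steinRegion_ne_top A B C X₀)
    (isOpen_lt continuous_const (by fun_prop)) ⟨X₀, ⟨hX₀, by simp, by simp⟩, ?_⟩)
  rw [Set.mem_ofPred_eq, ← neg_sub, inner_neg_left]
  linarith

theorem sP_lt_of_mem_steinCone (hspan : affineSpan ℝ {A, B, C} = ⊤) (hX₀ : X₀ ∈ tri A B C)
    (hpos : 0 < sP A B C X₀) (hX : X ∈ steinCone A B C X₀) (hne : X ≠ X₀) :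
    sP A B C X < sP A B C X₀ := by
  have hpos' : 0 < volume (steinRegion A B C X₀) := (ENNReal.toReal_pos_iff.1 hpos).1
  refine (ENNReal.toReal_lt_toReal (volume_steinRegion_ne_top A B C X)
    (volume_steinRegion_ne_top A B C X₀)).2 ?_
  have hinner : ⟪X - X₀, B - A⟫ ≠ 0 ∨ ⟪X - X₀, C - A⟫ ≠ 0 := by
    by_contra! h
    exact hne (sub_eq_zero.1 (eq_zero_of_inner_sub_eq_zero hspan h.1 h.2))
  rcases hinner with hB | hC
  · exact volume_steinRegion_lt hX₀ hpos' hX (hX.1.lt_of_ne hB)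
  · rw [← steinCone_swap] at hX
    rw [← tri_swap] at hX₀
    rw [← steinRegion_swap] at hpos'
    rw [← steinRegion_swap A B C X, ← steinRegion_swap A B C X₀]
    exact volume_steinRegion_lt hX₀ hpos' hX (hX.1.lt_of_ne hC)

end Steinhaus

theorem equal_areas_point_unique_general (A B C X₀ X : EuclideanSpace ℝ (Fin 2))
    (h : AffineIndependent ℝ ![A, B, C])
    (hX₀ : X₀ ∈ tri A B C)
    (heq : sP A B C X₀ = triArea A B C / 3 ∧ sP B A C X₀ = triArea A B C / 3 ∧ sP C A B X₀ = triArea A B C / 3)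
    (hne : X ≠ X₀) :
    min (sP A B C X) (min (sP B A C X) (sP C A B X)) < triArea A B C / 3 := by
  have hspan : affineSpan ℝ {A, B, C} = ⊤ := by
    have := h.affineSpan_eq_top_iff_card_eq_finrank_add_one.2 (by simp)
    rwa [Matrix.range_cons, Matrix.range_cons_cons_empty, Set.singleton_union] at this
  have hthird : 0 < triArea A B C / 3 := by linarith [triArea_pos hspan]
  have key : ∀ {P Q R}, ({P, Q, R} : Set _) = {A, B, C} → X ∈ steinCone P Q R X₀ →
      sP P Q R X₀ = triArea A B C / 3 → sP P Q R X < triArea A B C / 3 := by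
    intro P Q R hPQR hX hP
    have htri : tri P Q R = tri A B C := by rw [tri, tri, hPQR]
    exact hP ▸ sP_lt_of_mem_steinCone (hPQR ▸ hspan) (htri ▸ hX₀) (hP ▸ hthird) hX hne
  obtain ⟨hPA, hPB, hPC⟩ := heq
  rcases mem_steinCone_or A B C X₀ X with hXA | hXB | hXC
  · exact (min_le_left _ _).trans_lt (key rfl hXA hPA)
  · exact (min_le_right _ _).trans_lt <|
      (min_le_left _ _).trans_lt (key (Set.insert_comm _ _ _) hXB hPB)
  · have hCAB : ({C, A, B} : Set _) = {A, B, C} := by rw [Set.insert_comm C A, Set.pair_comm C B]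
    exact (min_le_right _ _).trans_lt <| (min_le_right _ _).trans_lt (key hCAB hXC hPC)

theorem equal_areas_point_unique (A B C X₀ X : EuclideanSpace ℝ (Fin 2))
    (h : AffineIndependent ℝ ![A, B, C]) (hac : Acute A B C)
    (hX₀ : X₀ ∈ tri A B C)
    (heq : sP A B C X₀ = triArea A B C / 3 ∧ sP B A C X₀ = triArea A B C / 3 ∧ sP C A B X₀ = triArea A B C / 3)
    (hX : X ∈ tri A B C) (hne : X ≠ X₀) :
    min (sP A B C X) (min (sP B A C X) (sP C A B X)) < triArea A B C / 3 :=
  equal_areas_point_unique_general A B C X₀ X h hX₀ heq hne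
end

section
/- For every (not necessarily acute) triangle ABC there is a unique point X₀ in the plane ℝ² such that the three lines through X₀ perpendicular respectively to lines BC, CA, AB partition the triangle into three parts of equal area |△ABC|/3, where the part associated to each vertex is the one containing (or nearest to) that vertex. -/
set_option maxHeartbeats 1600000

open MeasureTheory Real EuclideanGeometry
open scoped RealInnerProductSpace

open Set
open scoped ENNReal

namespace SteinAux

abbrev E2 := EuclideanSpace ℝ (Fin 2)

noncomputable def mv (W : Set E2) : ℝ := (volume W).toReal

def HLe (g : E2) (t : ℝ) : Set E2 := {Y | (inner ℝ Y g : ℝ) ≤ t}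

lemma continuous_ip (g : E2) : Continuous fun Y : E2 => (inner ℝ Y g : ℝ) :=
  continuous_id.inner continuous_const

lemma isClosed_HLe (g : E2) (t : ℝ) : IsClosed (HLe g t) :=
  isClosed_le (continuous_ip g) continuous_const

lemma measurableSet_HLe (g : E2) (t : ℝ) : MeasurableSet (HLe g t) :=
  (isClosed_HLe g t).measurableSet

lemma mem_HLe {g : E2} {t : ℝ} {Y : E2} : Y ∈ HLe g t ↔ (inner ℝ Y g : ℝ) ≤ t := Iff.rfl

noncomputable def ipl (g : E2) : E2 →ₗ[ℝ] ℝ :=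
{ toFun := fun Y => (inner ℝ Y g : ℝ),
  map_add' := fun x y => inner_add_left x y g,
  map_smul' := fun c x => real_inner_smul_left x g c }

lemma line_null (g : E2) (hg : g ≠ 0) (t : ℝ) :
    volume {Y : E2 | (inner ℝ Y g : ℝ) = t} = 0 := by
  have hgg : (inner ℝ g g : ℝ) ≠ 0 := fun h => hg (inner_self_eq_zero.mp h)
  have hker : LinearMap.ker (ipl g) ≠ ⊤ := by
    intro h
    have hgmem : g ∈ LinearMap.ker (ipl g) := h ▸ Submodule.mem_top
    exact hgg (LinearMap.mem_ker.mp hgmem)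
  have h0 : volume ((LinearMap.ker (ipl g) : Submodule ℝ E2) : Set E2) = 0 :=
    Measure.addHaar_submodule volume _ hker
  set x₀ : E2 := (t / (inner ℝ g g : ℝ)) • g with hx₀def
  have hx₀ : (inner ℝ x₀ g : ℝ) = t := by
    rw [hx₀def, real_inner_smul_left]
    exact div_mul_cancel₀ t hgg
  have hset : {Y : E2 | (inner ℝ Y g : ℝ) = t}
      = (fun Y => Y + (-x₀)) ⁻¹' ((LinearMap.ker (ipl g) : Submodule ℝ E2) : Set E2) := by
    ext Y
    simp only [mem_setOf_eq, mem_preimage, SetLike.mem_coe, LinearMap.mem_ker]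
    show (inner ℝ Y g : ℝ) = t ↔ (inner ℝ (Y + -x₀) g : ℝ) = 0
    rw [inner_add_left, inner_neg_left, hx₀]
    constructor <;> intro h <;> linarith
  rw [hset]
  rw [measure_preimage_add_right volume (-x₀) _]
  exact h0

lemma interior_nonempty_of_pos {K : Set E2} (hK : Convex ℝ K) (h : volume K ≠ 0) :
    (interior K).Nonempty := by
  rw [hK.interior_nonempty_iff_affineSpan_eq_top]
  by_contra hs
  exact h (measure_mono_null (subset_affineSpan ℝ K) (Measure.addHaar_affineSubspace volume _ hs))


lemma exists_between_seg {K : Set E2} (hK : Convex ℝ K) {g : E2} {s₁ s₂ : ℝ}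
    (h12 : s₁ < s₂) {x y : E2} (hx : x ∈ K) (hy : y ∈ K)
    (hx2 : (inner ℝ x g : ℝ) < s₂) (hy1 : s₁ < (inner ℝ y g : ℝ)) :
    ∃ w ∈ K, s₁ < (inner ℝ w g : ℝ) ∧ (inner ℝ w g : ℝ) < s₂ := by
  by_cases h : s₁ < (inner ℝ x g : ℝ)
  · exact ⟨x, hx, h, hx2⟩
  push_neg at h
  by_cases h' : (inner ℝ y g : ℝ) < s₂
  · exact ⟨y, hy, hy1, h'⟩
  push_neg at h'
  set px := (inner ℝ x g : ℝ) with hpx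
  set py := (inner ℝ y g : ℝ) with hpy
  have hd : 0 < py - px := by linarith
  set τ := (s₁ + s₂)/2 with hτ
  set θ := (τ - px)/(py - px) with hθ
  have hθ0 : 0 < θ := div_pos (by simp [hτ]; linarith) hd
  have hθ1 : θ < 1 := by
    rw [hθ, div_lt_one hd]
    have : τ < py := by simp [hτ]; linarith
    linarith
  refine ⟨(1-θ) • x + θ • y, hK hx hy (by linarith) hθ0.le (by ring), ?_, ?_⟩ <;>
  · have hw : (inner ℝ ((1-θ) • x + θ • y) g : ℝ) = τ := by
      rw [inner_add_left, real_inner_smul_left, real_inner_smul_left, ← hpx, ← hpy, hθ]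
      field_simp
      ring
    rw [hw, hτ]
    linarith

lemma slab_pos {K : Set E2} (hK : Convex ℝ K) (hKi : (interior K).Nonempty)
    {g : E2} {s₁ s₂ : ℝ} (h12 : s₁ < s₂) {x y : E2} (hx : x ∈ K) (hy : y ∈ K)
    (hx2 : (inner ℝ x g : ℝ) < s₂) (hy1 : s₁ < (inner ℝ y g : ℝ)) :
    0 < volume (K ∩ {Y : E2 | s₁ < (inner ℝ Y g : ℝ) ∧ (inner ℝ Y g : ℝ) < s₂}) := by
  obtain ⟨w, hwK, hw1, hw2⟩ := exists_between_seg hK h12 hx hy hx2 hy1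
  obtain ⟨z, hz⟩ := hKi
  set pw := (inner ℝ w g : ℝ) with hpw
  set pz := (inner ℝ z g : ℝ) with hpz
  set δ := min (pw - s₁) (s₂ - pw) with hδ
  have hδ0 : 0 < δ := lt_min (by linarith) (by linarith)
  set M := |pz - pw| with hM
  set ε := min (1/2 : ℝ) (δ / (2*(M+1))) with hε
  have hM0 : 0 ≤ M := abs_nonneg _
  have hε0 : 0 < ε := lt_min (by norm_num) (div_pos hδ0 (by linarith))
  have hε1 : ε < 1 := lt_of_le_of_lt (min_le_left _ _) (by norm_num)
  have hw' : ε • z + (1-ε) • w ∈ interior K :=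
    hK.combo_interior_closure_mem_interior hz (subset_closure hwK) hε0 (by linarith) (by ring)
  have hiw' : (inner ℝ (ε • z + (1-ε) • w) g : ℝ) = pw + ε * (pz - pw) := by
    rw [inner_add_left, real_inner_smul_left, real_inner_smul_left, ← hpz, ← hpw]; ring
  have hbound : |ε * (pz - pw)| < δ := by
    rw [abs_mul, abs_of_pos hε0, ← hM]
    calc ε * M ≤ (δ / (2*(M+1))) * M := by
          apply mul_le_mul_of_nonneg_right (min_le_right _ _) hM0
      _ < δ := by
          rw [div_mul_eq_mul_div, div_lt_iff₀ (by linarith)]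
          nlinarith
  have h1 : s₁ < (inner ℝ (ε • z + (1-ε) • w) g : ℝ) := by
    rw [hiw']
    have := neg_lt_of_abs_lt hbound
    have : δ ≤ pw - s₁ := min_le_left _ _
    nlinarith [neg_lt_of_abs_lt hbound]
  have h2 : (inner ℝ (ε • z + (1-ε) • w) g : ℝ) < s₂ := by
    rw [hiw']
    have h3 := lt_of_abs_lt hbound
    have : δ ≤ s₂ - pw := min_le_right _ _
    linarith
  have hopen : IsOpen (interior K ∩ {Y : E2 | s₁ < (inner ℝ Y g : ℝ) ∧ (inner ℝ Y g : ℝ) < s₂}) := by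
    apply isOpen_interior.inter
    have : {Y : E2 | s₁ < (inner ℝ Y g : ℝ) ∧ (inner ℝ Y g : ℝ) < s₂}
        = (fun Y : E2 => (inner ℝ Y g : ℝ)) ⁻¹' (Ioo s₁ s₂) := rfl
    rw [this]
    exact isOpen_Ioo.preimage (continuous_ip g)
  calc (0:ℝ≥0∞) < volume (interior K ∩ {Y : E2 | s₁ < (inner ℝ Y g : ℝ) ∧ (inner ℝ Y g : ℝ) < s₂}) :=
        hopen.measure_pos volume ⟨_, hw', h1, h2⟩
    _ ≤ _ := measure_mono (inter_subset_inter_left _ interior_subset)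


section
variable {W : Set E2}

lemma fin_subset (hfin : volume W ≠ ⊤) {V : Set E2} (h : V ⊆ W) : volume V ≠ ⊤ :=
  ne_top_of_le_ne_top hfin (measure_mono h)

lemma mv_mono (hfin : volume W ≠ ⊤) {V : Set E2} (h : V ⊆ W) : mv V ≤ mv W :=
  ENNReal.toReal_mono hfin (measure_mono h)

lemma G_mono (hfin : volume W ≠ ⊤) (g : E2) {t t' : ℝ} (h : t ≤ t') :
    mv (W ∩ HLe g t) ≤ mv (W ∩ HLe g t') := by
  apply ENNReal.toReal_mono (fin_subset hfin inter_subset_left)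
  exact measure_mono (inter_subset_inter_right _ (fun Y hY => le_trans hY h))

/-- Continuity of the one-parameter area function. -/
lemma cont_G (hW : MeasurableSet W) (hfin : volume W ≠ ⊤) {g : E2} (hg : g ≠ 0) :
    Continuous fun t => mv (W ∩ HLe g t) := by
  rw [continuous_iff_continuousAt]
  intro x
  rw [Metric.continuousAt_iff]
  intro ε hε
  set s : ℕ → Set E2 :=
    fun n => W ∩ {Y | x - 1/(n+1) < (inner ℝ Y g : ℝ) ∧ (inner ℝ Y g : ℝ) ≤ x + 1/(n+1)} with hs
  have hmeas : ∀ n, NullMeasurableSet (s n) volume := by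
    intro n
    refine (hW.inter ?_).nullMeasurableSet
    have : {Y : E2 | x - 1/(n+1) < (inner ℝ Y g : ℝ) ∧ (inner ℝ Y g : ℝ) ≤ x + 1/(n+1)}
        = (fun Y : E2 => (inner ℝ Y g : ℝ)) ⁻¹' (Ioc (x - 1/(n+1)) (x + 1/(n+1))) := rfl
    rw [this]
    exact measurableSet_Ioc.preimage (continuous_ip g).measurable
  have hanti : Antitone s := by
    intro m n hmn
    apply inter_subset_inter_right
    intro Y hY
    have h1 : 1/((n:ℝ)+1) ≤ 1/((m:ℝ)+1) := by
      apply one_div_le_one_div_of_le (by positivity)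
      exact_mod_cast Nat.succ_le_succ hmn
    exact ⟨by linarith [hY.1], by linarith [hY.2]⟩
  have hfin' : ∃ n, volume (s n) ≠ ⊤ := ⟨0, fin_subset hfin inter_subset_left⟩
  have hI0 : volume (⋂ n, s n) = 0 := by
    apply measure_mono_null _ (line_null g hg x)
    intro Y hY
    simp only [mem_iInter] at hY
    have h1 : (inner ℝ Y g : ℝ) ≤ x := by
      refine le_of_forall_pos_le_add fun δ hδ => ?_
      obtain ⟨n, hn⟩ := exists_nat_one_div_lt hδ
      have := (hY n).2.2
      push_cast at this hn ⊢
      linarith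
    have h2 : x ≤ (inner ℝ Y g : ℝ) := by
      refine le_of_forall_pos_le_add fun δ hδ => ?_
      obtain ⟨n, hn⟩ := exists_nat_one_div_lt hδ
      have := (hY n).2.1
      push_cast at this hn ⊢
      linarith
    exact le_antisymm h1 h2
  have htend := tendsto_measure_iInter_atTop hmeas hanti hfin'
  rw [hI0] at htend
  have hof : (0:ℝ≥0∞) < ENNReal.ofReal ε := ENNReal.ofReal_pos.mpr hε
  obtain ⟨n, hn⟩ := (htend.eventually_lt_const hof).exists
  refine ⟨1/(n+1), by positivity, fun {y} hy => ?_⟩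
  rw [Real.dist_eq] at hy ⊢
  have hkey : ∀ c d : ℝ, c ≤ d → d - x ≤ 1/(n+1) → x - 1/(n+1) ≤ c →
      mv (W ∩ HLe g d) - mv (W ∩ HLe g c) ≤ (volume (s n)).toReal := by
    intro c d hcd hdx hxc
    have hsub : W ∩ HLe g d ⊆ (W ∩ HLe g c) ∪ s n := by
      intro Y ⟨hYW, hYd⟩
      by_cases h : (inner ℝ Y g : ℝ) ≤ c
      · exact Or.inl ⟨hYW, h⟩
      · push_neg at h
        exact Or.inr ⟨hYW, by constructor <;> [linarith; linarith [mem_setOf_eq ▸ hYd]]⟩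
    have hv : volume (W ∩ HLe g d) ≤ volume (W ∩ HLe g c) + volume (s n) :=
      le_trans (measure_mono hsub) (measure_union_le _ _)
    have hfc := fin_subset hfin (inter_subset_left : W ∩ HLe g c ⊆ W)
    have hfs := fin_subset hfin (inter_subset_left : s n ⊆ W)
    have := ENNReal.toReal_mono (ENNReal.add_ne_top.mpr ⟨hfc, hfs⟩) hv
    rw [ENNReal.toReal_add hfc hfs] at this
    unfold mv
    linarith
  have hlt : (volume (s n)).toReal < ε := ENNReal.toReal_lt_of_lt_ofReal hn
  rcases le_total y x with h | h
  · have := hkey y x h (by linarith [abs_lt.mp (lt_of_lt_of_le hy (le_refl _))]) (by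
      have := abs_lt.mp hy; linarith)
    have hmono := G_mono hfin g h
    rw [abs_sub_comm, abs_of_nonneg (by linarith : (0:ℝ) ≤ mv (W ∩ HLe g x) - mv (W ∩ HLe g y))]
    linarith
  · have habs := abs_lt.mp hy
    have := hkey x y h (by linarith) (by linarith)
    have hmono := G_mono hfin g h
    rw [abs_of_nonneg (by linarith : (0:ℝ) ≤ mv (W ∩ HLe g y) - mv (W ∩ HLe g x))]
    linarith

end


section
variable {T : Set E2}

lemma slab_identity (hT : MeasurableSet T) (hfin : volume T ≠ ⊤) (g : E2) {t t' : ℝ} (h : t ≤ t') :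
    mv (T ∩ HLe g t) + mv (T ∩ HLe g t' ∩ (HLe g t)ᶜ) = mv (T ∩ HLe g t') := by
  have hsplit := measure_inter_add_diff (μ := volume) (T ∩ HLe g t') (measurableSet_HLe g t)
  have h1 : T ∩ HLe g t' ∩ HLe g t = T ∩ HLe g t := by
    ext Y; constructor
    · rintro ⟨⟨hT', _⟩, h2⟩; exact ⟨hT', h2⟩
    · rintro ⟨hT', h2⟩; exact ⟨⟨hT', mem_HLe.mpr (le_trans (mem_HLe.mp h2) h)⟩, h2⟩
  have h2 : (T ∩ HLe g t') \ HLe g t = T ∩ HLe g t' ∩ (HLe g t)ᶜ := diff_eq _ _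
  rw [h1, h2] at hsplit
  unfold mv
  rw [← ENNReal.toReal_add (fin_subset hfin inter_subset_left)
    (fin_subset hfin (inter_subset_left.trans inter_subset_left)), hsplit]

lemma F2_diff_le (hT : MeasurableSet T) (hfin : volume T ≠ ⊤) (g₁ g₂ : E2) (a b a' b' : ℝ) :
    mv (T ∩ HLe g₁ a ∩ HLe g₂ b) - mv (T ∩ HLe g₁ a' ∩ HLe g₂ b')
      ≤ (mv (T ∩ HLe g₁ (max a a')) - mv (T ∩ HLe g₁ (min a a')))
        + (mv (T ∩ HLe g₂ (max b b')) - mv (T ∩ HLe g₂ (min b b'))) := by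
  set S₁ := T ∩ HLe g₁ (max a a') ∩ (HLe g₁ (min a a'))ᶜ with hS₁
  set S₂ := T ∩ HLe g₂ (max b b') ∩ (HLe g₂ (min b b'))ᶜ with hS₂
  have hsub : T ∩ HLe g₁ a ∩ HLe g₂ b ⊆ (T ∩ HLe g₁ a' ∩ HLe g₂ b') ∪ S₁ ∪ S₂ := by
    rintro Y ⟨⟨hYT, h1⟩, h2⟩
    by_cases ha : (inner ℝ Y g₁ : ℝ) ≤ a'
    · by_cases hb : (inner ℝ Y g₂ : ℝ) ≤ b'
      · exact Or.inl (Or.inl ⟨⟨hYT, ha⟩, hb⟩)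
      · push_neg at hb
        refine Or.inr ⟨⟨hYT, mem_HLe.mpr (le_trans h2 (le_max_left _ _))⟩, ?_⟩
        simp only [mem_compl_iff, HLe, mem_setOf_eq, not_le]
        exact lt_of_le_of_lt (min_le_right _ _) hb
    · push_neg at ha
      refine Or.inl (Or.inr ⟨⟨hYT, mem_HLe.mpr (le_trans h1 (le_max_left _ _))⟩, ?_⟩)
      simp only [mem_compl_iff, HLe, mem_setOf_eq, not_le]
      exact lt_of_le_of_lt (min_le_right _ _) ha
  have hv : volume (T ∩ HLe g₁ a ∩ HLe g₂ b)
      ≤ volume (T ∩ HLe g₁ a' ∩ HLe g₂ b') + volume S₁ + volume S₂ :=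
    le_trans (measure_mono hsub) (le_trans (measure_union_le _ _)
      (add_le_add_left (measure_union_le _ _) _))
  have hf1 : volume (T ∩ HLe g₁ a' ∩ HLe g₂ b') ≠ ⊤ :=
    fin_subset hfin (inter_subset_left.trans inter_subset_left)
  have hfS₁ : volume S₁ ≠ ⊤ := fin_subset hfin (inter_subset_left.trans inter_subset_left)
  have hfS₂ : volume S₂ ≠ ⊤ := fin_subset hfin (inter_subset_left.trans inter_subset_left)
  have hreal : mv (T ∩ HLe g₁ a ∩ HLe g₂ b)
      ≤ mv (T ∩ HLe g₁ a' ∩ HLe g₂ b') + mv S₁ + mv S₂ := by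
    have := ENNReal.toReal_mono (by
      simp only [Ne, ENNReal.add_eq_top, not_or]
      exact ⟨⟨hf1, hfS₁⟩, hfS₂⟩) hv
    rwa [ENNReal.toReal_add (by simp [ENNReal.add_eq_top, hf1, hfS₁]) hfS₂,
      ENNReal.toReal_add hf1 hfS₁] at this
  have e1 := slab_identity hT hfin g₁ (min_le_max : min a a' ≤ max a a')
  have e2 := slab_identity hT hfin g₂ (min_le_max : min b b' ≤ max b b')
  rw [← hS₁] at e1
  rw [← hS₂] at e2
  linarith

lemma cont_F2 (hT : MeasurableSet T) (hfin : volume T ≠ ⊤) {g₁ g₂ : E2}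
    (h1 : g₁ ≠ 0) (h2 : g₂ ≠ 0) :
    Continuous fun s : ℝ × ℝ => mv (T ∩ HLe g₁ s.1 ∩ HLe g₂ s.2) := by
  rw [continuous_iff_continuousAt]
  intro s₀
  rw [Metric.continuousAt_iff]
  intro ε hε
  have hc1 := Metric.continuousAt_iff.mp ((cont_G hT hfin h1).continuousAt (x := s₀.1)) (ε/2)
    (by linarith)
  have hc2 := Metric.continuousAt_iff.mp ((cont_G hT hfin h2).continuousAt (x := s₀.2)) (ε/2)
    (by linarith)
  obtain ⟨δ₁, hδ₁, hb1⟩ := hc1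
  obtain ⟨δ₂, hδ₂, hb2⟩ := hc2
  refine ⟨min δ₁ δ₂, lt_min hδ₁ hδ₂, fun {s} hs => ?_⟩
  have hd1 : dist s.1 s₀.1 < δ₁ :=
    lt_of_le_of_lt (le_trans (le_max_left _ _) (le_of_eq (Prod.dist_eq).symm))
      (lt_of_lt_of_le hs (min_le_left _ _))
  have hd2 : dist s.2 s₀.2 < δ₂ :=
    lt_of_le_of_lt (le_trans (le_max_right _ _) (le_of_eq (Prod.dist_eq).symm))
      (lt_of_lt_of_le hs (min_le_right _ _))
  have k1 := hb1 hd1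
  have k2 := hb2 hd2
  rw [Real.dist_eq] at k1 k2 ⊢
  have habs1 : mv (T ∩ HLe g₁ (max s.1 s₀.1)) - mv (T ∩ HLe g₁ (min s.1 s₀.1))
      ≤ |mv (T ∩ HLe g₁ s.1) - mv (T ∩ HLe g₁ s₀.1)| := by
    rcases le_total s.1 s₀.1 with h | h
    · rw [max_eq_right h, min_eq_left h, abs_sub_comm,
        abs_of_nonneg (by linarith [G_mono hfin g₁ h])]
    · rw [max_eq_left h, min_eq_right h, abs_of_nonneg (by linarith [G_mono hfin g₁ h])]
  have habs2 : mv (T ∩ HLe g₂ (max s.2 s₀.2)) - mv (T ∩ HLe g₂ (min s.2 s₀.2))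
      ≤ |mv (T ∩ HLe g₂ s.2) - mv (T ∩ HLe g₂ s₀.2)| := by
    rcases le_total s.2 s₀.2 with h | h
    · rw [max_eq_right h, min_eq_left h, abs_sub_comm,
        abs_of_nonneg (by linarith [G_mono hfin g₂ h])]
    · rw [max_eq_left h, min_eq_right h, abs_of_nonneg (by linarith [G_mono hfin g₂ h])]
  have d1 := F2_diff_le hT hfin g₁ g₂ s.1 s.2 s₀.1 s₀.2
  have d2 := F2_diff_le hT hfin g₁ g₂ s₀.1 s₀.2 s.1 s.2
  rw [max_comm s₀.1 s.1, max_comm s₀.2 s.2, min_comm s₀.1 s.1, min_comm s₀.2 s.2] at d2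
  rw [abs_sub_lt_iff]
  constructor <;> linarith [abs_lt.mp (lt_of_le_of_lt (le_refl _) k1)]
end


lemma convex_HLe (g : E2) (t : ℝ) : Convex ℝ (HLe g t) := by
  intro x hx y hy α β hα hβ hs
  rw [mem_HLe] at *
  rw [inner_add_left, real_inner_smul_left, real_inner_smul_left]
  have ht : α*t + β*t = t := by rw [← add_mul, hs, one_mul]
  linarith [mul_le_mul_of_nonneg_left hx hα, mul_le_mul_of_nonneg_left hy hβ]

lemma convex_HGt (g : E2) (t : ℝ) : Convex ℝ ((HLe g t)ᶜ) := by
  intro x hx y hy α β hα hβ hs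
  simp only [mem_compl_iff, mem_HLe, not_le] at *
  rw [inner_add_left, real_inner_smul_left, real_inner_smul_left]
  rcases eq_or_lt_of_le hα with h | h
  · rw [← h] at hs ⊢; simp only [zero_add] at hs; simpa [hs] using hy
  rcases eq_or_lt_of_le hβ with h' | h'
  · rw [← h'] at hs ⊢; simp only [add_zero] at hs; simpa [hs] using hx
  have ht : α*t + β*t = t := by rw [← add_mul, hs, one_mul]
  linarith [mul_lt_mul_of_pos_left hx h, mul_lt_mul_of_pos_left hy h']

/-- extract a point with strictly smaller inner ℝ product -/
lemma exists_lt {K : Set E2} {g : E2} (hg : g ≠ 0) {t : ℝ}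
    (h : volume (K ∩ HLe g t) ≠ 0) : ∃ x ∈ K, (inner ℝ x g : ℝ) < t := by
  have hsub : K ∩ HLe g t ⊆ (K ∩ {Y | (inner ℝ Y g : ℝ) < t}) ∪ {Y : E2 | (inner ℝ Y g : ℝ) = t} := by
    rintro Y ⟨hYK, hYt⟩
    rcases lt_or_eq_of_le (mem_HLe.mp hYt) with h' | h'
    · exact Or.inl ⟨hYK, h'⟩
    · exact Or.inr h'
  have : volume (K ∩ {Y | (inner ℝ Y g : ℝ) < t}) ≠ 0 := by
    intro h0
    exact h (le_antisymm (le_trans (measure_mono hsub)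
      (le_trans (measure_union_le _ _) (by rw [h0, line_null g hg t]; simp))) zero_le)
  obtain ⟨x, hx⟩ := nonempty_of_measure_ne_zero this
  exact ⟨x, hx.1, hx.2⟩

lemma exists_gt {K : Set E2} {g : E2} {t : ℝ}
    (h : volume (K ∩ (HLe g t)ᶜ) ≠ 0) : ∃ x ∈ K, t < (inner ℝ x g : ℝ) := by
  obtain ⟨x, hx⟩ := nonempty_of_measure_ne_zero h
  exact ⟨x, hx.1, not_le.mp hx.2⟩

lemma vol_congr {U V N : Set E2} (hUV : U ⊆ V ∪ N) (hVU : V ⊆ U ∪ N) (hN : volume N = 0) :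
    volume U = volume V := by
  apply le_antisymm
  · exact le_trans (measure_mono hUV) (by simpa [hN] using measure_union_le (μ := volume) V N)
  · exact le_trans (measure_mono hVU) (by simpa [hN] using measure_union_le (μ := volume) U N)

section Core
variable {T : Set E2} {u v : E2}

/-- the split identity in real form -/
lemma mv_split (hfin : volume T ≠ ⊤) {W : Set E2} (hWT : W ⊆ T) {V : Set E2}
    (hV : MeasurableSet V) : mv (W ∩ V) + mv (W ∩ Vᶜ) = mv W := by
  have h := measure_inter_add_diff (μ := volume) W hV
  rw [diff_eq] at h
  unfold mv
  rw [← ENNReal.toReal_add (fin_subset hfin (inter_subset_left.trans hWT))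
    (fin_subset hfin (inter_subset_left.trans hWT)), h]

lemma mv_eq_vol_eq (hfin : volume T ≠ ⊤) {U V : Set E2} (hU : U ⊆ T) (hV : V ⊆ T)
    (h : mv U = mv V) : volume U = volume V :=
  (ENNReal.toReal_eq_toReal_iff' (fin_subset hfin hU) (fin_subset hfin hV)).mp h

lemma mv_mono' (hfin : volume T ≠ ⊤) {U V : Set E2} (hV : V ⊆ T) (h : U ⊆ V) : mv U ≤ mv V :=
  ENNReal.toReal_mono (fin_subset hfin hV) (measure_mono h)

/-- difference of equal-volume nested sets is null -/
lemma diff_null (hfin : volume T ≠ ⊤) {U V : Set E2} (hV : V ⊆ T) (hUV : U ⊆ V)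
    (hU : MeasurableSet U) (h : mv U = mv V) : volume (V \ U) = 0 := by
  have hvol := mv_eq_vol_eq hfin (hUV.trans hV) hV h
  rw [measure_diff hUV hU.nullMeasurableSet (fin_subset hfin (hUV.trans hV)), ← hvol, tsub_self]

/-- The cover identity: the three regions partition T up to null sets. -/
lemma cover_identity (hT : MeasurableSet T) (hfin : volume T ≠ ⊤)
    (hu : u ≠ 0) (hv : v ≠ 0) (hw : v - u ≠ 0) (a b : ℝ) :
    mv (T ∩ HLe u a ∩ HLe v b) + mv (T ∩ HLe (-u) (-a) ∩ HLe (v-u) (b-a))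
      + mv (T ∩ HLe (-v) (-b) ∩ HLe (-(v-u)) (a-b)) = mv T := by
  set c := b - a with hc
  -- key inner ℝ product identity: ⟪Y,v⟫ = ⟪Y,u⟫ + ⟪Y,v-u⟫
  have hipv : ∀ Y : E2, (inner ℝ Y v : ℝ) = inner ℝ Y u + inner ℝ Y (v - u) := by
    intro Y; rw [inner_sub_right]; ring
  have hsplit1 := mv_split (T := T) hfin (subset_refl T) (measurableSet_HLe u a)
  have hsplit2 := mv_split (T := T) hfin (inter_subset_left : T ∩ HLe u a ⊆ T)
    (measurableSet_HLe v b)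
  have hsplit3 := mv_split (T := T) hfin (inter_subset_left : T ∩ (HLe u a)ᶜ ⊆ T)
    (measurableSet_HLe (v-u) c)
  -- RB equals the third piece up to the line {⟪Y,u⟫ = a}
  have hRB : volume (T ∩ HLe (-u) (-a) ∩ HLe (v-u) c) = volume (T ∩ (HLe u a)ᶜ ∩ HLe (v-u) c) := by
    apply vol_congr (N := {Y : E2 | (inner ℝ Y u : ℝ) = a}) _ _ (line_null u hu a)
    · rintro Y ⟨⟨hYT, h1⟩, h2⟩
      rw [mem_HLe, inner_neg_right, neg_le_neg_iff] at h1
      rcases lt_or_eq_of_le h1 with h' | h'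
      · exact Or.inl ⟨⟨hYT, fun hh => absurd (mem_HLe.mp hh) (not_le.mpr h')⟩, h2⟩
      · exact Or.inr h'.symm
    · rintro Y ⟨⟨hYT, h1⟩, h2⟩
      refine Or.inl ⟨⟨hYT, ?_⟩, h2⟩
      rw [mem_HLe, inner_neg_right, neg_le_neg_iff]
      exact le_of_lt (not_le.mp h1)
  -- RC equals the union of pieces E1 and E2
  have hRC : volume (T ∩ HLe (-v) (-b) ∩ HLe (-(v-u)) (a-b))
      = volume ((T ∩ HLe u a ∩ (HLe v b)ᶜ) ∪ (T ∩ (HLe u a)ᶜ ∩ (HLe (v-u) c)ᶜ)) := by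
    apply vol_congr (N := {Y : E2 | (inner ℝ Y v : ℝ) = b} ∪ {Y : E2 | (inner ℝ Y (v-u) : ℝ) = c}) _ _
      (by rw [measure_union_null_iff]; exact ⟨line_null v hv b, line_null _ hw c⟩)
    · rintro Y ⟨⟨hYT, h1⟩, h2⟩
      rw [mem_HLe, inner_neg_right, neg_le_neg_iff] at h1  -- b ≤ ⟪Y,v⟫
      rw [mem_HLe, inner_neg_right, neg_le_iff_add_nonneg] at h2
      have h2' : c ≤ (inner ℝ Y (v-u) : ℝ) := by linarith [h2]
      by_cases hp : (inner ℝ Y u : ℝ) ≤ a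
      · rcases lt_or_eq_of_le h1 with h' | h'
        · exact Or.inl (Or.inl ⟨⟨hYT, hp⟩, fun hh => absurd (mem_HLe.mp hh) (not_le.mpr h')⟩)
        · exact Or.inr (Or.inl h'.symm)
      · rcases lt_or_eq_of_le h2' with h' | h'
        · exact Or.inl (Or.inr ⟨⟨hYT, fun hh => hp (mem_HLe.mp hh)⟩,
            fun hh => absurd (mem_HLe.mp hh) (not_le.mpr h')⟩)
        · exact Or.inr (Or.inr h'.symm)
    · rintro Y hY
      refine Or.inl ?_
      rcases hY with ⟨⟨hYT, h1⟩, h2⟩ | ⟨⟨hYT, h1⟩, h2⟩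
      · have h2' : b < (inner ℝ Y v : ℝ) := not_le.mp h2
        refine ⟨⟨hYT, ?_⟩, ?_⟩
        · rw [mem_HLe, inner_neg_right]; linarith
        · rw [mem_HLe, inner_neg_right]
          have := hipv Y
          have h1' := mem_HLe.mp h1
          linarith
      · have h1' : a < (inner ℝ Y u : ℝ) := not_le.mp h1
        have h2' : c < (inner ℝ Y (v-u) : ℝ) := not_le.mp h2
        refine ⟨⟨hYT, ?_⟩, ?_⟩
        · rw [mem_HLe, inner_neg_right]
          have := hipv Y
          linarith
        · rw [mem_HLe, inner_neg_right]; linarith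
  -- the union is disjoint
  have hdisj : Disjoint (T ∩ HLe u a ∩ (HLe v b)ᶜ) (T ∩ (HLe u a)ᶜ ∩ (HLe (v-u) c)ᶜ) := by
    rw [disjoint_left]
    rintro Y ⟨⟨_, h1⟩, _⟩ ⟨⟨_, h2⟩, _⟩
    exact h2 h1
  have hEunion : mv ((T ∩ HLe u a ∩ (HLe v b)ᶜ) ∪ (T ∩ (HLe u a)ᶜ ∩ (HLe (v-u) c)ᶜ))
      = mv (T ∩ HLe u a ∩ (HLe v b)ᶜ) + mv (T ∩ (HLe u a)ᶜ ∩ (HLe (v-u) c)ᶜ) := by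
    unfold mv
    rw [measure_union hdisj ((hT.inter (measurableSet_HLe u a).compl).inter
      (measurableSet_HLe (v-u) c).compl),
      ENNReal.toReal_add (fin_subset hfin (inter_subset_left.trans inter_subset_left))
        (fin_subset hfin (inter_subset_left.trans inter_subset_left))]
  have hmvRB : mv (T ∩ HLe (-u) (-a) ∩ HLe (v-u) c) = mv (T ∩ (HLe u a)ᶜ ∩ HLe (v-u) c) := by
    unfold mv; rw [hRB]
  have hmvRC : mv (T ∩ HLe (-v) (-b) ∩ HLe (-(v-u)) (a-b))
      = mv (T ∩ HLe u a ∩ (HLe v b)ᶜ) + mv (T ∩ (HLe u a)ᶜ ∩ (HLe (v-u) c)ᶜ) := by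
    rw [← hEunion]; unfold mv; rw [hRC]
  rw [hmvRB, hmvRC]
  linarith

end Core


section Core
variable {T : Set E2} {u v : E2}

lemma mv_empty : mv (∅ : Set E2) = 0 := by simp [mv]

lemma mv_nonneg (W : Set E2) : 0 ≤ mv W := ENNReal.toReal_nonneg

lemma vol_ne_zero_of_mv_pos {W : Set E2} (h : 0 < mv W) : volume W ≠ 0 :=
  fun h0 => by simp [mv, h0] at h

lemma mv_pos (hfin : volume T ≠ ⊤) (hpos : volume T ≠ 0) : 0 < mv T :=
  ENNReal.toReal_pos hpos hfin

lemma HLe_mono (g : E2) {t t' : ℝ} (h : t ≤ t') : HLe g t ⊆ HLe g t' :=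
  fun Y hY => mem_HLe.mpr (le_trans (mem_HLe.mp hY) h)

lemma compl_vol_ne_zero (hT : MeasurableSet T) (hfin : volume T ≠ ⊤) {A : Set E2}
    (hA : MeasurableSet A) (hAT : A ⊆ T) (h : mv A < mv T) : volume (T \ A) ≠ 0 := by
  intro h0
  have hsplit := measure_inter_add_diff (μ := volume) T hA
  rw [inter_eq_right.mpr hAT, h0, add_zero] at hsplit
  rw [show mv A = mv T from by unfold mv; rw [hsplit]] at h
  exact lt_irrefl _ h

/-- Strict increase along the diagonal direction. -/
lemma diag_strict (hT : MeasurableSet T) (hconv : Convex ℝ T) (hfin : volume T ≠ ⊤)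
    (hu : u ≠ 0) (hv : v ≠ 0) {t s s' : ℝ} (hss : s < s')
    (h0 : volume (T ∩ HLe u s ∩ HLe v (s - t)) ≠ 0)
    (hc : volume (T \ (T ∩ HLe u s ∩ HLe v (s - t))) ≠ 0) :
    mv (T ∩ HLe u s ∩ HLe v (s-t)) < mv (T ∩ HLe u s' ∩ HLe v (s'-t)) := by
  set A := T ∩ HLe u s ∩ HLe v (s-t) with hA
  set A' := T ∩ HLe u s' ∩ HLe v (s'-t) with hA'
  have hAT : A ⊆ T := inter_subset_left.trans inter_subset_left
  have hA'T : A' ⊆ T := inter_subset_left.trans inter_subset_left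
  have hAA' : A ⊆ A' :=
    inter_subset_inter (inter_subset_inter_right _ (HLe_mono u hss.le))
      (HLe_mono v (by linarith))
  set m : E2 → ℝ := fun Y => max ((inner ℝ Y u : ℝ) - s) ((inner ℝ Y v : ℝ) - (s - t)) with hm
  have hmcont : Continuous m :=
    ((continuous_ip u).sub continuous_const).max ((continuous_ip v).sub continuous_const)
  -- a point x ∈ T with m x < 0
  have hx : ∃ x ∈ T, m x < 0 := by
    have hsub : A ⊆ (T ∩ {Y | m Y < 0}) ∪
        ({Y : E2 | (inner ℝ Y u : ℝ) = s} ∪ {Y : E2 | (inner ℝ Y v : ℝ) = s - t}) := by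
      rintro Y ⟨⟨hYT, h1⟩, h2⟩
      rcases lt_or_eq_of_le (mem_HLe.mp h1) with h1' | h1'
      · rcases lt_or_eq_of_le (mem_HLe.mp h2) with h2' | h2'
        · exact Or.inl ⟨hYT, show m Y < 0 from max_lt (by linarith) (by linarith)⟩
        · exact Or.inr (Or.inr h2')
      · exact Or.inr (Or.inl h1')
    have hN : volume ({Y : E2 | (inner ℝ Y u : ℝ) = s} ∪ {Y : E2 | (inner ℝ Y v : ℝ) = s - t}) = 0 :=
      measure_union_null_iff.mpr ⟨line_null u hu s, line_null v hv (s-t)⟩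
    have : volume (T ∩ {Y | m Y < 0}) ≠ 0 := by
      intro hz
      apply h0
      refine le_antisymm (le_trans (measure_mono hsub) ?_) zero_le
      calc volume _ ≤ volume (T ∩ {Y | m Y < 0}) + volume _ := measure_union_le _ _
        _ = 0 := by rw [hz, hN, add_zero]
    obtain ⟨x, hx1, hx2⟩ := nonempty_of_measure_ne_zero this
    exact ⟨x, hx1, hx2⟩
  -- a point y ∈ T with 0 < m y
  have hy : ∃ y ∈ T, 0 < m y := by
    obtain ⟨y, hy1⟩ := nonempty_of_measure_ne_zero hc
    refine ⟨y, hy1.1, ?_⟩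
    have := hy1.2
    rw [hA] at this
    simp only [mem_inter_iff, not_and] at this
    rcases not_and_or.mp (fun hh => this ⟨hy1.1, hh.1⟩ hh.2) with h' | h'
    · exact lt_max_of_lt_left (by linarith [not_le.mp (fun hh => h' (mem_HLe.mpr hh))])
    · exact lt_max_of_lt_right (by linarith [not_le.mp (fun hh => h' (mem_HLe.mpr hh))])
  obtain ⟨x, hxT, hxm⟩ := hx
  obtain ⟨y, hyT, hym⟩ := hy
  set δ := s' - s with hδ
  have hδ0 : 0 < δ := by linarith
  -- a point w ∈ T with 0 < m w < δ
  have hw : ∃ w ∈ T, 0 < m w ∧ m w < δ := by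
    by_cases hcase : m y < δ
    · exact ⟨y, hyT, hym, hcase⟩
    push_neg at hcase
    set φ : ℝ → ℝ := fun θ => m ((1-θ) • x + θ • y) with hφ
    have hφcont : Continuous φ := by
      apply hmcont.comp
      exact ((continuous_const.sub continuous_id).smul continuous_const).add
        (continuous_id.smul continuous_const)
    have hmem : δ/2 ∈ Icc (φ 0) (φ 1) := by
      constructor
      · simp only [hφ]; norm_num; linarith
      · simp only [hφ]; norm_num; linarith
    obtain ⟨θ, hθmem, hθ⟩ := intermediate_value_Icc (by norm_num : (0:ℝ) ≤ 1)
      hφcont.continuousOn hmem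
    refine ⟨(1-θ) • x + θ • y, hconv hxT hyT (by linarith [hθmem.2]) hθmem.1 (by ring), ?_, ?_⟩
    · rw [show m ((1-θ) • x + θ • y) = φ θ from rfl, hθ]; linarith
    · rw [show m ((1-θ) • x + θ • y) = φ θ from rfl, hθ]; linarith
  obtain ⟨w, hwT, hw0, hwδ⟩ := hw
  obtain ⟨z, hz⟩ := interior_nonempty_of_pos hconv
    (fun hz0 => h0 (le_antisymm (le_trans (measure_mono hAT) (le_of_eq hz0)) zero_le))
  -- find ε > 0 small so that the combo keeps m in (0, δ)
  set ψ : ℝ → ℝ := fun ε => m (ε • z + (1-ε) • w) with hψ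
  have hψcont : Continuous ψ := by
    apply hmcont.comp
    exact (continuous_id.smul continuous_const).add
      ((continuous_const.sub continuous_id).smul continuous_const)
  have hψ0 : ψ 0 = m w := by simp [hψ]
  obtain ⟨η, hη0, hηb⟩ := Metric.continuousAt_iff.mp hψcont.continuousAt
    (min (m w) (δ - m w)) (lt_min hw0 (by linarith))
  set ε := min (η/2) (1/2) with hε
  have hε0 : 0 < ε := lt_min (by linarith) (by norm_num)
  have hε1 : ε ≤ 1/2 := min_le_right _ _
  have hdist : dist ε 0 < η := by
    rw [Real.dist_eq, sub_zero, abs_of_pos hε0]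
    exact lt_of_le_of_lt (min_le_left _ _) (by linarith)
  have hψε := hηb hdist
  rw [hψ0, Real.dist_eq] at hψε
  have hψε' := abs_lt.mp hψε
  have hw'mem : ε • z + (1-ε) • w ∈ interior T :=
    hconv.combo_interior_closure_mem_interior hz (subset_closure hwT) hε0 (by linarith) (by ring)
  have hw'm1 : 0 < ψ ε := by
    have := hψε'.1
    have h1 : δ - m w ≥ min (m w) (δ - m w) := min_le_right _ _
    have h2 : m w ≥ min (m w) (δ - m w) := min_le_left _ _
    linarith
  have hw'm2 : ψ ε < δ := by
    have := hψε'.2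
    have h1 : δ - m w ≥ min (m w) (δ - m w) := min_le_right _ _
    linarith
  -- the open set
  set O := interior T ∩ {Y | 0 < m Y ∧ m Y < δ} with hO
  have hOopen : IsOpen O := by
    apply isOpen_interior.inter
    have : {Y : E2 | 0 < m Y ∧ m Y < δ} = m ⁻¹' (Ioo 0 δ) := rfl
    rw [this]; exact isOpen_Ioo.preimage hmcont
  have hOne : O.Nonempty := ⟨ε • z + (1-ε) • w, hw'mem, hw'm1, hw'm2⟩
  have hOsub : O ⊆ A' \ A := by
    rintro Y ⟨hY1, hY2, hY3⟩
    have hYT := interior_subset hY1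
    constructor
    · refine ⟨⟨hYT, mem_HLe.mpr ?_⟩, mem_HLe.mpr ?_⟩
      · have := le_max_left ((inner ℝ Y u : ℝ) - s) ((inner ℝ Y v : ℝ) - (s - t))
        have : (inner ℝ Y u : ℝ) - s < δ := lt_of_le_of_lt this hY3
        linarith
      · have := le_max_right ((inner ℝ Y u : ℝ) - s) ((inner ℝ Y v : ℝ) - (s - t))
        have : (inner ℝ Y v : ℝ) - (s-t) < δ := lt_of_le_of_lt this hY3
        linarith
    · intro hYA
      obtain ⟨⟨_, h1⟩, h2⟩ := hYA
      have : m Y ≤ 0 := max_le (by linarith [mem_HLe.mp h1]) (by linarith [mem_HLe.mp h2])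
      linarith
  -- conclude
  have hAmeas : MeasurableSet A :=
    (hT.inter (measurableSet_HLe u s)).inter (measurableSet_HLe v (s-t))
  have hsplitA := measure_inter_add_diff (μ := volume) A' hAmeas
  rw [inter_eq_right.mpr hAA'] at hsplitA
  have hdiffpos : volume (A' \ A) ≠ 0 := by
    intro hz0
    have hpos := hOopen.measure_pos volume hOne
    have hle := measure_mono (μ := volume) hOsub
    rw [hz0] at hle
    exact absurd (le_antisymm hle zero_le) (ne_of_gt hpos)
  have hlt : volume A < volume A' := by
    rw [← hsplitA]
    exact ENNReal.lt_add_right (fin_subset hfin hAT) hdiffpos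
  exact ENNReal.toReal_lt_toReal (fin_subset hfin hAT) (fin_subset hfin hA'T) |>.mpr hlt

end Core


section Core
variable {T : Set E2} {u v : E2} {R : ℝ}

lemma Ameas (hT : MeasurableSet T) (g₁ g₂ : E2) (c₁ c₂ : ℝ) :
    MeasurableSet (T ∩ HLe g₁ c₁ ∩ HLe g₂ c₂) :=
  (hT.inter (measurableSet_HLe g₁ c₁)).inter (measurableSet_HLe g₂ c₂)

lemma Asub (g₁ g₂ : E2) (c₁ c₂ : ℝ) : T ∩ HLe g₁ c₁ ∩ HLe g₂ c₂ ⊆ T :=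
  inter_subset_left.trans inter_subset_left

lemma alpha_exU (hT : MeasurableSet T) (hconv : Convex ℝ T) (hfin : volume T ≠ ⊤)
    (hpos : volume T ≠ 0) (hu : u ≠ 0) (hv : v ≠ 0)
    (hRu : ∀ Y ∈ T, |(inner ℝ Y u : ℝ)| ≤ R) (hRv : ∀ Y ∈ T, |(inner ℝ Y v : ℝ)| ≤ R) (t : ℝ) :
    ∃! s : ℝ, mv (T ∩ HLe u s ∩ HLe v (s - t)) = mv T / 3 := by
  have hmvT := mv_pos hfin hpos
  have hs3 : 0 < mv T / 3 := by linarith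
  have hR0 : 0 ≤ R := by
    obtain ⟨Y, hY⟩ := nonempty_of_measure_ne_zero hpos
    exact le_trans (abs_nonneg _) (hRu Y hY)
  set f : ℝ → ℝ := fun s => mv (T ∩ HLe u s ∩ HLe v (s - t)) with hf
  have hfc : Continuous f := by
    have := (cont_F2 hT hfin hu hv).comp
      ((continuous_id.prodMk (continuous_id.sub continuous_const)) : Continuous fun s : ℝ => (s, s - t))
    exact this
  have hlo : f (-(R+1)) = 0 := by
    have hempty : T ∩ HLe u (-(R+1)) ∩ HLe v (-(R+1) - t) = ∅ := by
      rw [eq_empty_iff_forall_notMem]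
      rintro Y ⟨⟨hYT, h1⟩, -⟩
      have := (abs_le.mp (hRu Y hYT)).1
      have := mem_HLe.mp h1
      linarith
    rw [hf]; simp only []; rw [hempty, mv_empty]
  have hhi : f (R + |t| + 1) = mv T := by
    have hTeq : T ∩ HLe u (R + |t| + 1) ∩ HLe v ((R + |t| + 1) - t) = T := by
      apply le_antisymm (Asub _ _ _ _)
      intro Y hY
      have h1 := (abs_le.mp (hRu Y hY)).2
      have h2 := (abs_le.mp (hRv Y hY)).2
      have h3 := le_abs_self t
      have h4 := abs_nonneg t
      exact ⟨⟨hY, mem_HLe.mpr (by linarith)⟩, mem_HLe.mpr (by linarith)⟩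
    rw [hf]; simp only []; rw [hTeq]
  have hle : -(R+1) ≤ R + |t| + 1 := by linarith [abs_nonneg t]
  have hmem : mv T / 3 ∈ Icc (f (-(R+1))) (f (R + |t| + 1)) := by
    rw [hlo, hhi]; exact ⟨by linarith, by linarith⟩
  obtain ⟨s, _, hs0⟩ := intermediate_value_Icc hle hfc.continuousOn hmem
  have hs : mv (T ∩ HLe u s ∩ HLe v (s - t)) = mv T / 3 := hs0
  refine ⟨s, hs, fun s' hs0' => ?_⟩
  have hs' : mv (T ∩ HLe u s' ∩ HLe v (s' - t)) = mv T / 3 := hs0'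
  by_contra hne
  rcases lt_or_gt_of_ne hne with h | h
  · have := diag_strict hT hconv hfin hu hv h
      (vol_ne_zero_of_mv_pos (W := T ∩ HLe u s' ∩ HLe v (s' - t)) (by rw [hs']; exact hs3))
      (compl_vol_ne_zero hT hfin (Ameas hT _ _ _ _) (Asub _ _ _ _) (by rw [hs']; linarith))
    rw [hs, hs'] at this
    exact lt_irrefl _ this
  · have := diag_strict hT hconv hfin hu hv h
      (vol_ne_zero_of_mv_pos (W := T ∩ HLe u s ∩ HLe v (s - t)) (by rw [hs]; exact hs3))
      (compl_vol_ne_zero hT hfin (Ameas hT _ _ _ _) (Asub _ _ _ _) (by rw [hs]; linarith))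
    rw [hs, hs'] at this
    exact lt_irrefl _ this

lemma exists_sol (hT : MeasurableSet T) (hconv : Convex ℝ T) (hfin : volume T ≠ ⊤)
    (hpos : volume T ≠ 0) (hu : u ≠ 0) (hv : v ≠ 0) (hw : v - u ≠ 0)
    (hRu : ∀ Y ∈ T, |(inner ℝ Y u : ℝ)| ≤ R) (hRv : ∀ Y ∈ T, |(inner ℝ Y v : ℝ)| ≤ R)
    (hRw : ∀ Y ∈ T, |(inner ℝ Y (v - u) : ℝ)| ≤ R) :
    ∃ ab : ℝ × ℝ,
      mv (T ∩ HLe u ab.1 ∩ HLe v ab.2) = mv T / 3 ∧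
      mv (T ∩ HLe (-u) (-ab.1) ∩ HLe (v-u) (ab.2 - ab.1)) = mv T / 3 ∧
      mv (T ∩ HLe (-v) (-ab.2) ∩ HLe (-(v-u)) (ab.1 - ab.2)) = mv T / 3 := by
  have hmvT := mv_pos hfin hpos
  have hs3 : 0 < mv T / 3 := by linarith
  have hR0 : 0 ≤ R := by
    obtain ⟨Y, hY⟩ := nonempty_of_measure_ne_zero hpos
    exact le_trans (abs_nonneg _) (hRu Y hY)
  have hexu := alpha_exU (R := R) hT hconv hfin hpos hu hv hRu hRv
  set α : ℝ → ℝ := fun t => (hexu t).exists.choose with hα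
  have hαs : ∀ t, mv (T ∩ HLe u (α t) ∩ HLe v (α t - t)) = mv T / 3 :=
    fun t => (hexu t).exists.choose_spec
  have hAmono : ∀ (t : ℝ) {s s' : ℝ}, s ≤ s' →
      mv (T ∩ HLe u s ∩ HLe v (s - t)) ≤ mv (T ∩ HLe u s' ∩ HLe v (s' - t)) := by
    intro t s s' h
    exact mv_mono' hfin (Asub _ _ _ _)
      (inter_subset_inter (inter_subset_inter_right _ (HLe_mono u h)) (HLe_mono v (by linarith)))
  have hstrict : ∀ (t s : ℝ), mv (T ∩ HLe u s ∩ HLe v (s - t)) = mv T / 3 → ∀ ε > 0,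
      mv T / 3 < mv (T ∩ HLe u (s+ε) ∩ HLe v ((s+ε) - t)) ∧
      mv (T ∩ HLe u (s-ε) ∩ HLe v ((s-ε) - t)) < mv T / 3 := by
    intro t s hs ε hε
    constructor
    · have := diag_strict hT hconv hfin hu hv (show s < s + ε by linarith)
        (vol_ne_zero_of_mv_pos (W := T ∩ HLe u s ∩ HLe v (s - t)) (by rw [hs]; exact hs3))
        (compl_vol_ne_zero hT hfin (Ameas hT _ _ _ _) (Asub _ _ _ _) (by rw [hs]; linarith))
      rwa [hs] at this
    · by_cases h0 : volume (T ∩ HLe u (s-ε) ∩ HLe v ((s-ε) - t)) = 0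
      · rw [show mv (T ∩ HLe u (s-ε) ∩ HLe v ((s-ε) - t)) = 0 from by simp [mv, h0]]
        exact hs3
      · have hlt : mv (T ∩ HLe u (s-ε) ∩ HLe v ((s-ε) - t)) < mv T := by
          have := hAmono t (show s - ε ≤ s by linarith)
          rw [hs] at this
          linarith
        have := diag_strict hT hconv hfin hu hv (show s - ε < s by linarith) h0
          (compl_vol_ne_zero hT hfin (Ameas hT _ _ _ _) (Asub _ _ _ _) hlt)
        rwa [hs] at this
  have hαcont : Continuous α := by
    rw [continuous_iff_continuousAt]
    intro t₀
    rw [Metric.continuousAt_iff]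
    intro ε hε
    obtain ⟨hp, hm⟩ := hstrict t₀ (α t₀) (hαs t₀) ε hε
    have hD : Continuous fun ts : ℝ × ℝ => mv (T ∩ HLe u ts.2 ∩ HLe v (ts.2 - ts.1)) :=
      (cont_F2 hT hfin hu hv).comp (continuous_snd.prodMk (continuous_snd.sub continuous_fst))
    have hc₁ : Continuous fun t => mv (T ∩ HLe u (α t₀ + ε) ∩ HLe v ((α t₀ + ε) - t)) :=
      hD.comp (continuous_id.prodMk continuous_const)
    have hc₂ : Continuous fun t => mv (T ∩ HLe u (α t₀ - ε) ∩ HLe v ((α t₀ - ε) - t)) :=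
      hD.comp (continuous_id.prodMk continuous_const)
    obtain ⟨δ₁, hδ₁0, hδ₁⟩ := Metric.continuousAt_iff.mp hc₁.continuousAt
      (mv (T ∩ HLe u (α t₀ + ε) ∩ HLe v ((α t₀ + ε) - t₀)) - mv T / 3) (by linarith)
    obtain ⟨δ₂, hδ₂0, hδ₂⟩ := Metric.continuousAt_iff.mp hc₂.continuousAt
      (mv T / 3 - mv (T ∩ HLe u (α t₀ - ε) ∩ HLe v ((α t₀ - ε) - t₀))) (by linarith)
    refine ⟨min δ₁ δ₂, lt_min hδ₁0 hδ₂0, fun {t} ht => ?_⟩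
    have h₁ := hδ₁ (lt_of_lt_of_le ht (min_le_left _ _))
    have h₂ := hδ₂ (lt_of_lt_of_le ht (min_le_right _ _))
    rw [Real.dist_eq] at h₁ h₂ ⊢
    have hgt : mv T / 3 < mv (T ∩ HLe u (α t₀ + ε) ∩ HLe v ((α t₀ + ε) - t)) := by
      have := (abs_lt.mp h₁).1; linarith
    have hlt : mv (T ∩ HLe u (α t₀ - ε) ∩ HLe v ((α t₀ - ε) - t)) < mv T / 3 := by
      have := (abs_lt.mp h₂).2; linarith
    have hup : α t < α t₀ + ε := by
      by_contra hcon
      push_neg at hcon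
      have := hAmono t hcon
      rw [hαs t] at this
      linarith
    have hdown : α t₀ - ε < α t := by
      by_contra hcon
      push_neg at hcon
      have := hAmono t hcon
      rw [hαs t] at this
      linarith
    rw [abs_lt]
    constructor <;> linarith
  -- endpoints
  set t₂ := 2*R + 1 with ht₂
  set t₁ := -(2*R + 1) with ht₁
  set Φ : ℝ → ℝ := fun t => mv (T ∩ HLe (-u) (-(α t)) ∩ HLe (v-u) (-t)) with hΦ
  have hΦcont : Continuous Φ := by
    have := (cont_F2 hT hfin (neg_ne_zero.mpr hu) hw).comp
      (((hαcont.neg).prodMk continuous_neg) : Continuous fun t : ℝ => (-(α t), -t))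
    exact this
  have hΦt₂ : Φ t₂ ≤ mv T / 3 := by
    have hα2 : R + 1 ≤ α t₂ := by
      have h0 : volume (T ∩ HLe u (α t₂) ∩ HLe v (α t₂ - t₂)) ≠ 0 :=
        vol_ne_zero_of_mv_pos (by rw [hαs t₂]; exact hs3)
      obtain ⟨Y, hY⟩ := nonempty_of_measure_ne_zero h0
      have h1 := mem_HLe.mp hY.2
      have h2 := (abs_le.mp (hRv Y (Asub u v _ _ hY))).1
      rw [ht₂] at *
      linarith
    have hempty : T ∩ HLe (-u) (-(α t₂)) ∩ HLe (v-u) (-t₂) = ∅ := by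
      rw [eq_empty_iff_forall_notMem]
      rintro Y ⟨⟨hYT, h1⟩, -⟩
      have h2 := (abs_le.mp (hRu Y hYT)).2
      have h3 := mem_HLe.mp h1
      rw [inner_neg_right] at h3
      linarith
    rw [hΦ]; simp only []; rw [hempty, mv_empty]; linarith
  have hΦt₁ : mv T / 3 ≤ Φ t₁ := by
    have hα1 : -R ≤ α t₁ := by
      have h0 : volume (T ∩ HLe u (α t₁) ∩ HLe v (α t₁ - t₁)) ≠ 0 :=
        vol_ne_zero_of_mv_pos (by rw [hαs t₁]; exact hs3)
      obtain ⟨Y, hY⟩ := nonempty_of_measure_ne_zero h0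
      have h1 := mem_HLe.mp hY.1.2
      have h2 := (abs_le.mp (hRu Y hY.1.1)).1
      linarith
    -- the w-halfplane contains T
    have hTsub : T ⊆ HLe (v-u) (-t₁) := by
      intro Y hY
      have := (abs_le.mp (hRw Y hY)).2
      rw [mem_HLe, ht₁]
      linarith
    -- the v-halfplane in the A-region contains T
    have hTsubv : T ⊆ HLe v (α t₁ - t₁) := by
      intro Y hY
      have := (abs_le.mp (hRv Y hY)).2
      rw [mem_HLe, ht₁]
      linarith
    have hAeq : T ∩ HLe u (α t₁) ∩ HLe v (α t₁ - t₁) = T ∩ HLe u (α t₁) := by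
      apply le_antisymm inter_subset_left
      intro Y hY
      exact ⟨hY, hTsubv hY.1⟩
    have hBeq : T ∩ HLe (-u) (-(α t₁)) ∩ HLe (v-u) (-t₁) = T ∩ HLe (-u) (-(α t₁)) := by
      apply le_antisymm inter_subset_left
      intro Y hY
      exact ⟨hY, hTsub hY.1⟩
    have hcongr : volume (T ∩ HLe (-u) (-(α t₁))) = volume (T ∩ (HLe u (α t₁))ᶜ) := by
      apply vol_congr (N := {Y : E2 | (inner ℝ Y u : ℝ) = α t₁}) _ _ (line_null u hu _)
      · rintro Y ⟨hYT, h1⟩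
        rw [mem_HLe, inner_neg_right, neg_le_neg_iff] at h1
        rcases lt_or_eq_of_le h1 with h' | h'
        · exact Or.inl ⟨hYT, fun hh => absurd (mem_HLe.mp hh) (not_le.mpr h')⟩
        · exact Or.inr h'.symm
      · rintro Y ⟨hYT, h1⟩
        refine Or.inl ⟨hYT, ?_⟩
        rw [mem_HLe, inner_neg_right, neg_le_neg_iff]
        exact le_of_lt (not_le.mp h1)
    have hsplit := mv_split (T := T) hfin (subset_refl T) (measurableSet_HLe u (α t₁))
    have hAval : mv (T ∩ HLe u (α t₁)) = mv T / 3 := by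
      rw [← hAeq]; exact hαs t₁
    rw [hΦ]; simp only []
    rw [hBeq, show mv (T ∩ HLe (-u) (-(α t₁))) = mv (T ∩ (HLe u (α t₁))ᶜ) from by
      unfold mv; rw [hcongr]]
    linarith
  have hIVT := intermediate_value_Icc' (show t₁ ≤ t₂ by rw [ht₁, ht₂]; linarith)
    hΦcont.continuousOn (mem_Icc.mpr ⟨hΦt₂, hΦt₁⟩)
  obtain ⟨t, _, htΦ⟩ := hIVT
  refine ⟨(α t, α t - t), hαs t, ?_, ?_⟩
  · have : (α t - t) - α t = -t := by ring
    rw [this]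
    exact htΦ
  · have hcover := cover_identity (T := T) hT hfin hu hv hw (α t) (α t - t)
    have h1 := hαs t
    have h2 : mv (T ∩ HLe (-u) (-(α t)) ∩ HLe (v-u) ((α t - t) - α t)) = mv T / 3 := by
      rw [show (α t - t) - α t = -t by ring]; exact htΦ
    linarith
end Core


section Core
variable {T : Set E2} {u v : E2}

lemma vol_ne_zero_mono {U V : Set E2} (h : volume U ≠ 0) (hsub : U ⊆ V) : volume V ≠ 0 :=
  fun h0 => h (le_antisymm (le_trans (measure_mono hsub) h0.le) zero_le)

lemma mv_of_vol_zero {U : Set E2} (h : volume U = 0) : mv U = 0 := by simp [mv, h]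

lemma diff_null' {T : Set E2} (hfin : volume T ≠ ⊤) {U V : Set E2} (hV : V ⊆ T) (hUV : U ⊆ V)
    (hU : MeasurableSet U) (h : mv U = mv V) : volume (V \ U) = 0 := by
  have hvol : volume U = volume V :=
    (ENNReal.toReal_eq_toReal_iff' (fin_subset hfin (hUV.trans hV)) (fin_subset hfin hV)).mp h
  rw [measure_diff hUV hU.nullMeasurableSet (fin_subset hfin (hUV.trans hV)), ← hvol, tsub_self]

lemma vol_RB_flip (hu : u ≠ 0) (a c : ℝ) :
    volume (T ∩ HLe (-u) (-a) ∩ HLe (v-u) c) = volume (T ∩ (HLe u a)ᶜ ∩ HLe (v-u) c) := by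
  apply vol_congr (N := {Y : E2 | (inner ℝ Y u : ℝ) = a}) _ _ (line_null u hu a)
  · rintro Y ⟨⟨hYT, h1⟩, h2⟩
    rw [mem_HLe, inner_neg_right, neg_le_neg_iff] at h1
    rcases lt_or_eq_of_le h1 with h' | h'
    · exact Or.inl ⟨⟨hYT, fun hh => absurd (mem_HLe.mp hh) (not_le.mpr h')⟩, h2⟩
    · exact Or.inr h'.symm
  · rintro Y ⟨⟨hYT, h1⟩, h2⟩
    refine Or.inl ⟨⟨hYT, ?_⟩, h2⟩
    rw [mem_HLe, inner_neg_right, neg_le_neg_iff]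
    exact le_of_lt (not_le.mp h1)

lemma vol_RC_flip (hv : v ≠ 0) (hw : v - u ≠ 0) (a b : ℝ) :
    volume (T ∩ HLe (-v) (-b) ∩ HLe (-(v-u)) (a-b))
      = volume (T ∩ (HLe v b)ᶜ ∩ (HLe (v-u) (b-a))ᶜ) := by
  apply vol_congr
    (N := {Y : E2 | (inner ℝ Y v : ℝ) = b} ∪ {Y : E2 | (inner ℝ Y (v-u) : ℝ) = b-a}) _ _
    (measure_union_null_iff.mpr ⟨line_null v hv b, line_null _ hw (b-a)⟩)
  · rintro Y ⟨⟨hYT, h1⟩, h2⟩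
    rw [mem_HLe, inner_neg_right, neg_le_neg_iff] at h1
    rw [mem_HLe, inner_neg_right] at h2
    have h2' : b - a ≤ (inner ℝ Y (v-u) : ℝ) := by linarith
    rcases lt_or_eq_of_le h1 with h1' | h1'
    · rcases lt_or_eq_of_le h2' with h2'' | h2''
      · exact Or.inl ⟨⟨hYT, fun hh => absurd (mem_HLe.mp hh) (not_le.mpr h1')⟩,
          fun hh => absurd (mem_HLe.mp hh) (not_le.mpr h2'')⟩
      · exact Or.inr (Or.inr h2''.symm)
    · exact Or.inr (Or.inl h1'.symm)
  · rintro Y ⟨⟨hYT, h1⟩, h2⟩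
    refine Or.inl ⟨⟨hYT, ?_⟩, ?_⟩
    · rw [mem_HLe, inner_neg_right, neg_le_neg_iff]
      exact le_of_lt (not_le.mp h1)
    · rw [mem_HLe, inner_neg_right]
      have := not_le.mp (show ¬(inner ℝ Y (v-u) : ℝ) ≤ b - a from fun hh => h2 hh)
      linarith

/-- Core uniqueness argument: two equal-area threshold pairs with weakly
increasing thresholds coincide. -/
lemma uniq_core (hT : MeasurableSet T) (hconv : Convex ℝ T) (hfin : volume T ≠ ⊤)
    (hpos : volume T ≠ 0) (hu : u ≠ 0) (hv : v ≠ 0) (hw : v - u ≠ 0)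
    {a b a' b' : ℝ} (haa : a ≤ a') (hbb : b ≤ b') (hne : a < a' ∨ b < b')
    (hA : mv (T ∩ HLe u a ∩ HLe v b) = mv T / 3)
    (hB : mv (T ∩ HLe (-u) (-a) ∩ HLe (v-u) (b-a)) = mv T / 3)
    (hC : mv (T ∩ HLe (-v) (-b) ∩ HLe (-(v-u)) (a-b)) = mv T / 3)
    (hA' : mv (T ∩ HLe u a' ∩ HLe v b') = mv T / 3)
    (hB' : mv (T ∩ HLe (-u) (-a') ∩ HLe (v-u) (b'-a')) = mv T / 3)
    (hC' : mv (T ∩ HLe (-v) (-b') ∩ HLe (-(v-u)) (a'-b')) = mv T / 3) : False := by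
  have hmvT := mv_pos hfin hpos
  have hs3 : 0 < mv T / 3 := by linarith
  have hAA' : T ∩ HLe u a ∩ HLe v b ⊆ T ∩ HLe u a' ∩ HLe v b' :=
    inter_subset_inter (inter_subset_inter_right _ (HLe_mono u haa)) (HLe_mono v hbb)
  have hdiff : volume ((T ∩ HLe u a' ∩ HLe v b') \ (T ∩ HLe u a ∩ HLe v b)) = 0 :=
    diff_null' hfin (Asub _ _ _ _) hAA' (Ameas hT _ _ _ _) (hA.trans hA'.symm)
  have hvolA : volume (T ∩ HLe u a ∩ HLe v b) ≠ 0 :=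
    vol_ne_zero_of_mv_pos (by rw [hA]; exact hs3)
  rcases lt_or_eq_of_le hbb with hb | hbeq
  -- ============ CASE b < b' ============
  · -- slab in K := T ∩ HLe u a is null
    have hN1 : volume (T ∩ HLe u a ∩ {Y : E2 | b < (inner ℝ Y v : ℝ) ∧ (inner ℝ Y v : ℝ) < b'}) = 0 := by
      apply measure_mono_null _ hdiff
      rintro Y ⟨⟨hYT, h1⟩, h2, h3⟩
      exact ⟨⟨⟨hYT, HLe_mono u haa h1⟩, mem_HLe.mpr h3.le⟩,
        fun hh => absurd (mem_HLe.mp hh.2) (not_le.mpr h2)⟩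
    have hKconv : Convex ℝ (T ∩ HLe u a) := hconv.inter (convex_HLe u a)
    have hKvol : volume (T ∩ HLe u a) ≠ 0 := vol_ne_zero_mono hvolA inter_subset_left
    obtain ⟨x, hxK, hxq⟩ := exists_lt hv hvolA
    have hClaim1 : volume (T ∩ HLe u a ∩ (HLe v b)ᶜ) = 0 := by
      by_contra hcc
      obtain ⟨y, hyK, hyq⟩ := exists_gt hcc
      have := slab_pos hKconv (interior_nonempty_of_pos hKconv hKvol) hb hxK hyK
        (lt_trans hxq hb) hyq
      exact absurd (measure_mono_null (Subset.refl _) hN1 ▸ this) (lt_irrefl 0)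
    have hKval : mv (T ∩ HLe u a) = mv T / 3 := by
      have := mv_split (T := T) hfin (inter_subset_left : T ∩ HLe u a ⊆ T) (measurableSet_HLe v b)
      rw [mv_of_vol_zero hClaim1] at this
      linarith [hA]
    -- same for K' := T ∩ HLe u a'
    have hN1' : volume (T ∩ HLe u a' ∩ {Y : E2 | b < (inner ℝ Y v : ℝ) ∧ (inner ℝ Y v : ℝ) < b'}) = 0 := by
      apply measure_mono_null _ hdiff
      rintro Y ⟨⟨hYT, h1⟩, h2, h3⟩
      exact ⟨⟨⟨hYT, h1⟩, mem_HLe.mpr h3.le⟩,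
        fun hh => absurd (mem_HLe.mp hh.2) (not_le.mpr h2)⟩
    have hK'conv : Convex ℝ (T ∩ HLe u a') := hconv.inter (convex_HLe u a')
    have hsubAK' : T ∩ HLe u a ∩ HLe v b ⊆ T ∩ HLe u a' ∩ HLe v b :=
      inter_subset_inter_left _ (inter_subset_inter_right _ (HLe_mono u haa))
    have hvolK'b : volume (T ∩ HLe u a' ∩ HLe v b) ≠ 0 := vol_ne_zero_mono hvolA hsubAK'
    have hK'vol : volume (T ∩ HLe u a') ≠ 0 := vol_ne_zero_mono hvolK'b inter_subset_left
    obtain ⟨x', hx'K, hx'q⟩ := exists_lt hv hvolK'b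
    have hClaim1' : volume (T ∩ HLe u a' ∩ (HLe v b)ᶜ) = 0 := by
      by_contra hcc
      obtain ⟨y', hy'K, hy'q⟩ := exists_gt hcc
      have := slab_pos hK'conv (interior_nonempty_of_pos hK'conv hK'vol) hb hx'K hy'K
        (lt_trans hx'q hb) hy'q
      exact absurd (measure_mono_null (Subset.refl _) hN1' ▸ this) (lt_irrefl 0)
    have hK'val : mv (T ∩ HLe u a') = mv T / 3 := by
      have hsplit := mv_split (T := T) hfin (inter_subset_left : T ∩ HLe u a' ⊆ T)
        (measurableSet_HLe v b)
      rw [mv_of_vol_zero hClaim1'] at hsplit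
      have hup : mv (T ∩ HLe u a' ∩ HLe v b) ≤ mv T / 3 := by
        rw [← hA']
        exact mv_mono' hfin (Asub _ _ _ _) (inter_subset_inter_right _ (HLe_mono v hbb))
      have hdn : mv T / 3 ≤ mv (T ∩ HLe u a' ∩ HLe v b) := by
        rw [← hA]
        exact mv_mono' hfin (Asub _ _ _ _) hsubAK'
      linarith
    have hslab_a : volume ((T ∩ HLe u a') \ (T ∩ HLe u a)) = 0 :=
      diff_null' hfin inter_subset_left
        (inter_subset_inter_right _ (HLe_mono u haa))
        (hT.inter (measurableSet_HLe u a)) (hKval.trans hK'val.symm)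
    rcases lt_or_eq_of_le haa with ha | haeq
    · -- a < a' : contradiction via a slab in T
      obtain ⟨xT, hxT, hxp⟩ := exists_lt hu (vol_ne_zero_mono hKvol (subset_refl _))
      have hcomplvol : volume (T ∩ (HLe u a)ᶜ) ≠ 0 := by
        apply vol_ne_zero_of_mv_pos
        have := mv_split (T := T) hfin (subset_refl T) (measurableSet_HLe u a)
        rw [show T ∩ HLe u a = T ∩ HLe u a from rfl] at this
        have h2 : mv (T ∩ HLe u a) = mv T / 3 := hKval
        linarith
      obtain ⟨yT, hyT, hyp⟩ := exists_gt hcomplvol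
      have hslabpos := slab_pos hconv (interior_nonempty_of_pos hconv hpos) ha hxT hyT
        (lt_of_lt_of_le hxp haa) hyp
      have : volume (T ∩ {Y : E2 | a < (inner ℝ Y u : ℝ) ∧ (inner ℝ Y u : ℝ) < a'}) = 0 := by
        apply measure_mono_null _ hslab_a
        rintro Y ⟨hYT, h1, h2⟩
        exact ⟨⟨hYT, mem_HLe.mpr h2.le⟩, fun hh => absurd (mem_HLe.mp hh.2) (not_le.mpr h1)⟩
      rw [this] at hslabpos
      exact lt_irrefl _ hslabpos
    · -- a = a' : contradiction via the w-slab in K₂ := T ∩ (HLe u a)ᶜ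
      have hcc' : b - a < b' - a' := by rw [← haeq]; linarith
      have hK₂conv : Convex ℝ (T ∩ (HLe u a)ᶜ) := hconv.inter (convex_HGt u a)
      have hK₂val : mv (T ∩ (HLe u a)ᶜ) = mv T / 3 + mv T / 3 := by
        have := mv_split (T := T) hfin (subset_refl T) (measurableSet_HLe u a)
        rw [show T ∩ HLe u a = T ∩ HLe u a from rfl] at this
        have hcov : mv T = mv T / 3 + mv T / 3 + mv T / 3 := by ring
        linarith [hKval]
      have hK₂vol : volume (T ∩ (HLe u a)ᶜ) ≠ 0 :=
        vol_ne_zero_of_mv_pos (by rw [hK₂val]; linarith)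
      have hBflip : mv (T ∩ (HLe u a)ᶜ ∩ HLe (v-u) (b-a)) = mv T / 3 := by
        rw [show mv (T ∩ (HLe u a)ᶜ ∩ HLe (v-u) (b-a))
            = mv (T ∩ HLe (-u) (-a) ∩ HLe (v-u) (b-a)) from by
          unfold mv; rw [vol_RB_flip hu]]
        exact hB
      have hB'flip : mv (T ∩ (HLe u a)ᶜ ∩ HLe (v-u) (b'-a')) = mv T / 3 := by
        rw [show mv (T ∩ (HLe u a)ᶜ ∩ HLe (v-u) (b'-a'))
            = mv (T ∩ HLe (-u) (-a') ∩ HLe (v-u) (b'-a')) from by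
          unfold mv; rw [vol_RB_flip hu, haeq]]
        exact hB'
      obtain ⟨x₂, hx₂, hx₂r⟩ := exists_lt hw (vol_ne_zero_of_mv_pos
        (W := T ∩ (HLe u a)ᶜ ∩ HLe (v-u) (b-a)) (by rw [hBflip]; exact hs3))
      have hy₂vol : volume (T ∩ (HLe u a)ᶜ ∩ (HLe (v-u) (b-a))ᶜ) ≠ 0 := by
        apply vol_ne_zero_of_mv_pos
        have := mv_split (T := T) hfin
          (inter_subset_left : T ∩ (HLe u a)ᶜ ⊆ T) (measurableSet_HLe (v-u) (b-a))
        linarith [hBflip, hK₂val]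
      obtain ⟨y₂, hy₂, hy₂r⟩ := exists_gt hy₂vol
      have hslabpos := slab_pos hK₂conv (interior_nonempty_of_pos hK₂conv hK₂vol) hcc'
        hx₂ hy₂ (lt_trans hx₂r hcc') hy₂r
      have hdiffnull : volume ((T ∩ (HLe u a)ᶜ ∩ HLe (v-u) (b'-a'))
          \ (T ∩ (HLe u a)ᶜ ∩ HLe (v-u) (b-a))) = 0 := by
        apply diff_null' hfin (inter_subset_left.trans inter_subset_left)
          (inter_subset_inter_right _ (HLe_mono _ hcc'.le))
          ((hT.inter (measurableSet_HLe u a).compl).inter (measurableSet_HLe (v-u) (b-a)))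
          (hBflip.trans hB'flip.symm)
      have : volume (T ∩ (HLe u a)ᶜ ∩
          {Y : E2 | b - a < (inner ℝ Y (v-u) : ℝ) ∧ (inner ℝ Y (v-u) : ℝ) < b' - a'}) = 0 := by
        apply measure_mono_null _ hdiffnull
        rintro Y ⟨hYK, h1, h2⟩
        exact ⟨⟨hYK, mem_HLe.mpr h2.le⟩, fun hh => absurd (mem_HLe.mp hh.2) (not_le.mpr h1)⟩
      rw [this] at hslabpos
      exact lt_irrefl _ hslabpos
  -- ============ CASE b = b' ============
  · have ha : a < a' := by
      rcases hne with h | h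
      · exact h
      · rw [hbeq] at h; exact absurd h (lt_irrefl _)
    -- K₃ := T ∩ HLe v b
    have hK₃conv : Convex ℝ (T ∩ HLe v b) := hconv.inter (convex_HLe v b)
    have hAcomm : T ∩ HLe v b ∩ HLe u a = T ∩ HLe u a ∩ HLe v b := inter_right_comm _ _ _
    have hvolA₃ : volume (T ∩ HLe v b ∩ HLe u a) ≠ 0 := by rw [hAcomm]; exact hvolA
    obtain ⟨x₃, hx₃, hx₃p⟩ := exists_lt hu hvolA₃
    have hK₃vol : volume (T ∩ HLe v b) ≠ 0 := vol_ne_zero_mono hvolA₃ inter_subset_left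
    have hN2 : volume (T ∩ HLe v b ∩ {Y : E2 | a < (inner ℝ Y u : ℝ) ∧ (inner ℝ Y u : ℝ) < a'}) = 0 := by
      apply measure_mono_null _ hdiff
      rintro Y ⟨⟨hYT, h1⟩, h2, h3⟩
      refine ⟨⟨⟨hYT, mem_HLe.mpr h3.le⟩, HLe_mono v hbb h1⟩, ?_⟩
      · exact fun hh => absurd (mem_HLe.mp hh.1.2) (not_le.mpr h2)
    have hClaim3 : volume (T ∩ HLe v b ∩ (HLe u a)ᶜ) = 0 := by
      by_contra hcc
      obtain ⟨y₃, hy₃, hy₃p⟩ := exists_gt hcc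
      have := slab_pos hK₃conv (interior_nonempty_of_pos hK₃conv hK₃vol) ha hx₃ hy₃
        (lt_trans hx₃p ha) hy₃p
      exact absurd (measure_mono_null (Subset.refl _) hN2 ▸ this) (lt_irrefl 0)
    have hK₃val : mv (T ∩ HLe v b) = mv T / 3 := by
      have hsplit := mv_split (T := T) hfin (inter_subset_left : T ∩ HLe v b ⊆ T)
        (measurableSet_HLe u a)
      rw [mv_of_vol_zero hClaim3] at hsplit
      rw [show mv (T ∩ HLe v b ∩ HLe u a) = mv (T ∩ HLe u a ∩ HLe v b) from by rw [hAcomm]] at hsplit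
      linarith [hA]
    -- K₆ := T ∩ (HLe v b)ᶜ
    have hK₆conv : Convex ℝ (T ∩ (HLe v b)ᶜ) := hconv.inter (convex_HGt v b)
    have hK₆val : mv (T ∩ (HLe v b)ᶜ) = mv T / 3 + mv T / 3 := by
      have := mv_split (T := T) hfin (subset_refl T) (measurableSet_HLe v b)
      linarith [hK₃val]
    have hK₆vol : volume (T ∩ (HLe v b)ᶜ) ≠ 0 :=
      vol_ne_zero_of_mv_pos (by rw [hK₆val]; linarith)
    have hCflip : mv (T ∩ (HLe v b)ᶜ ∩ (HLe (v-u) (b-a))ᶜ) = mv T / 3 := by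
      rw [show mv (T ∩ (HLe v b)ᶜ ∩ (HLe (v-u) (b-a))ᶜ)
          = mv (T ∩ HLe (-v) (-b) ∩ HLe (-(v-u)) (a-b)) from by
        unfold mv; rw [vol_RC_flip hv hw]]
      exact hC
    have hC'flip : mv (T ∩ (HLe v b)ᶜ ∩ (HLe (v-u) (b-a'))ᶜ) = mv T / 3 := by
      rw [show mv (T ∩ (HLe v b)ᶜ ∩ (HLe (v-u) (b-a'))ᶜ)
          = mv (T ∩ HLe (-v) (-b') ∩ HLe (-(v-u)) (a'-b')) from by
        unfold mv; rw [vol_RC_flip hv hw, hbeq]]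
      exact hC'
    have hc'c : b - a' < b - a := by linarith
    -- points
    obtain ⟨y₆, hy₆, hy₆r⟩ := exists_gt (vol_ne_zero_of_mv_pos
      (W := T ∩ (HLe v b)ᶜ ∩ (HLe (v-u) (b-a))ᶜ) (by rw [hCflip]; exact hs3))
    have hx₆vol : volume (T ∩ (HLe v b)ᶜ ∩ HLe (v-u) (b-a)) ≠ 0 := by
      apply vol_ne_zero_of_mv_pos
      have := mv_split (T := T) hfin
        (inter_subset_left : T ∩ (HLe v b)ᶜ ⊆ T) (measurableSet_HLe (v-u) (b-a))
      linarith [hCflip, hK₆val]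
    obtain ⟨x₆, hx₆, hx₆r⟩ := exists_lt hw hx₆vol
    have hslabpos := slab_pos hK₆conv (interior_nonempty_of_pos hK₆conv hK₆vol) hc'c
      hx₆ hy₆ hx₆r (lt_trans hc'c hy₆r)
    have hdiffnull : volume ((T ∩ (HLe v b)ᶜ ∩ (HLe (v-u) (b-a'))ᶜ)
        \ (T ∩ (HLe v b)ᶜ ∩ (HLe (v-u) (b-a))ᶜ)) = 0 := by
      apply diff_null' hfin (inter_subset_left.trans inter_subset_left)
        (inter_subset_inter_right _ (compl_subset_compl.mpr (HLe_mono _ hc'c.le)))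
        ((hT.inter (measurableSet_HLe v b).compl).inter (measurableSet_HLe (v-u) (b-a)).compl)
        (hCflip.trans hC'flip.symm)
    have : volume (T ∩ (HLe v b)ᶜ ∩
        {Y : E2 | b - a' < (inner ℝ Y (v-u) : ℝ) ∧ (inner ℝ Y (v-u) : ℝ) < b - a}) = 0 := by
      apply measure_mono_null _ hdiffnull
      rintro Y ⟨hYK, h1, h2⟩
      refine ⟨⟨hYK, fun hh => absurd (mem_HLe.mp hh) (not_le.mpr h1)⟩, ?_⟩
      intro hh
      exact hh.2 (mem_HLe.mpr h2.le)
    rw [this] at hslabpos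
    exact lt_irrefl _ hslabpos
end Core


section Core
variable {T : Set E2} {u v : E2}

lemma uniq (hT : MeasurableSet T) (hconv : Convex ℝ T) (hfin : volume T ≠ ⊤)
    (hpos : volume T ≠ 0) (hu : u ≠ 0) (hv : v ≠ 0) (hw : v - u ≠ 0)
    {a b a' b' : ℝ}
    (hA : mv (T ∩ HLe u a ∩ HLe v b) = mv T / 3)
    (hB : mv (T ∩ HLe (-u) (-a) ∩ HLe (v-u) (b-a)) = mv T / 3)
    (hC : mv (T ∩ HLe (-v) (-b) ∩ HLe (-(v-u)) (a-b)) = mv T / 3)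
    (hA' : mv (T ∩ HLe u a' ∩ HLe v b') = mv T / 3)
    (hB' : mv (T ∩ HLe (-u) (-a') ∩ HLe (v-u) (b'-a')) = mv T / 3)
    (hC' : mv (T ∩ HLe (-v) (-b') ∩ HLe (-(v-u)) (a'-b')) = mv T / 3) :
    a = a' ∧ b = b' := by
  have e1 : (-(v-u)) - (-v) = u := by abel
  have e2 : (v-u) - (-u) = v := by abel
  -- form B instantiation
  have formB : ∀ a₀ b₀ a₁ b₁ : ℝ, (-a₀ ≤ -a₁) → (b₀ - a₀ ≤ b₁ - a₁) →
      ((-a₀ < -a₁) ∨ (b₀ - a₀ < b₁ - a₁)) →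
      mv (T ∩ HLe u a₀ ∩ HLe v b₀) = mv T / 3 →
      mv (T ∩ HLe (-u) (-a₀) ∩ HLe (v-u) (b₀-a₀)) = mv T / 3 →
      mv (T ∩ HLe (-v) (-b₀) ∩ HLe (-(v-u)) (a₀-b₀)) = mv T / 3 →
      mv (T ∩ HLe u a₁ ∩ HLe v b₁) = mv T / 3 →
      mv (T ∩ HLe (-u) (-a₁) ∩ HLe (v-u) (b₁-a₁)) = mv T / 3 →
      mv (T ∩ HLe (-v) (-b₁) ∩ HLe (-(v-u)) (a₁-b₁)) = mv T / 3 → False := by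
    intro a₀ b₀ a₁ b₁ h1 h2 h3 kA kB kC kA' kB' kC'
    apply uniq_core (u := -u) (v := v - u) hT hconv hfin hpos
      (neg_ne_zero.mpr hu) hw (by rw [e2]; exact hv) h1 h2 h3 kB ?_ ?_ kB' ?_ ?_
    · rw [neg_neg, neg_neg, e2, show (b₀-a₀) - (-a₀) = b₀ by ring]; exact kA
    · rw [e2, show (-a₀) - (b₀-a₀) = -b₀ by ring, show -(b₀-a₀) = a₀-b₀ by ring,
        inter_right_comm]
      exact kC
    · rw [neg_neg, neg_neg, e2, show (b₁-a₁) - (-a₁) = b₁ by ring]; exact kA'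
    · rw [e2, show (-a₁) - (b₁-a₁) = -b₁ by ring, show -(b₁-a₁) = a₁-b₁ by ring,
        inter_right_comm]
      exact kC'
  -- form C instantiation
  have formC : ∀ a₀ b₀ a₁ b₁ : ℝ, (-b₀ ≤ -b₁) → (a₀ - b₀ ≤ a₁ - b₁) →
      ((-b₀ < -b₁) ∨ (a₀ - b₀ < a₁ - b₁)) →
      mv (T ∩ HLe u a₀ ∩ HLe v b₀) = mv T / 3 →
      mv (T ∩ HLe (-u) (-a₀) ∩ HLe (v-u) (b₀-a₀)) = mv T / 3 →
      mv (T ∩ HLe (-v) (-b₀) ∩ HLe (-(v-u)) (a₀-b₀)) = mv T / 3 →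
      mv (T ∩ HLe u a₁ ∩ HLe v b₁) = mv T / 3 →
      mv (T ∩ HLe (-u) (-a₁) ∩ HLe (v-u) (b₁-a₁)) = mv T / 3 →
      mv (T ∩ HLe (-v) (-b₁) ∩ HLe (-(v-u)) (a₁-b₁)) = mv T / 3 → False := by
    intro a₀ b₀ a₁ b₁ h1 h2 h3 kA kB kC kA' kB' kC'
    apply uniq_core (u := -v) (v := -(v-u)) hT hconv hfin hpos
      (neg_ne_zero.mpr hv) (neg_ne_zero.mpr hw) (by rw [e1]; exact hu) h1 h2 h3 kC ?_ ?_ kC' ?_ ?_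
    · rw [neg_neg, neg_neg, e1, show (a₀-b₀) - (-b₀) = a₀ by ring, inter_right_comm]
      exact kA
    · rw [neg_neg, e1, show (-b₀) - (a₀-b₀) = -a₀ by ring, show -(a₀-b₀) = b₀-a₀ by ring,
        inter_right_comm]
      exact kB
    · rw [neg_neg, neg_neg, e1, show (a₁-b₁) - (-b₁) = a₁ by ring, inter_right_comm]
      exact kA'
    · rw [neg_neg, e1, show (-b₁) - (a₁-b₁) = -a₁ by ring, show -(a₁-b₁) = b₁-a₁ by ring,
        inter_right_comm]
      exact kB'
  rcases lt_trichotomy a a' with ha | ha | ha <;> rcases lt_trichotomy b b' with hb | hb | hb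
  · exact absurd (uniq_core hT hconv hfin hpos hu hv hw ha.le hb.le (Or.inl ha)
      hA hB hC hA' hB' hC') id
  · exact absurd (uniq_core hT hconv hfin hpos hu hv hw ha.le hb.le (Or.inl ha)
      hA hB hC hA' hB' hC') id
  · -- a < a', b' < b : form C
    exact absurd (formC a b a' b' (by linarith) (by linarith) (Or.inl (by linarith))
      hA hB hC hA' hB' hC') id
  · exact absurd (uniq_core hT hconv hfin hpos hu hv hw ha.le hb.le (Or.inr hb)
      hA hB hC hA' hB' hC') id
  · exact ⟨ha, hb⟩
  · -- a = a', b' < b : form C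
    exact absurd (formC a b a' b' (by linarith) (by linarith) (Or.inl (by linarith))
      hA hB hC hA' hB' hC') id
  · -- a' < a, b < b' : form B
    exact absurd (formB a b a' b' (by linarith) (by linarith) (Or.inl (by linarith))
      hA hB hC hA' hB' hC') id
  · -- a' < a, b = b' : form B
    exact absurd (formB a b a' b' (by linarith) (by linarith) (Or.inl (by linarith))
      hA hB hC hA' hB' hC') id
  · -- a' < a, b' < b : split on comparison of a - b and a' - b'
    rcases le_or_gt (a - b) (a' - b') with hc | hc
    · rcases lt_or_eq_of_le hc with hc' | hc'
      · exact absurd (formC a b a' b' (by linarith) hc (Or.inl (by linarith))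
          hA hB hC hA' hB' hC') id
      · exact absurd (formC a b a' b' (by linarith) hc (Or.inl (by linarith))
          hA hB hC hA' hB' hC') id
    · -- a - b > a' - b' ⇒ b - a < b' - a' : form B
      exact absurd (formB a b a' b' (by linarith) (by linarith) (Or.inr (by linarith))
        hA hB hC hA' hB' hC') id

theorem core_existsUnique {R : ℝ} (hT : MeasurableSet T) (hconv : Convex ℝ T)
    (hfin : volume T ≠ ⊤)
    (hpos : volume T ≠ 0) (hu : u ≠ 0) (hv : v ≠ 0) (hw : v - u ≠ 0)
    (hRu : ∀ Y ∈ T, |(inner ℝ Y u : ℝ)| ≤ R) (hRv : ∀ Y ∈ T, |(inner ℝ Y v : ℝ)| ≤ R)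
    (hRw : ∀ Y ∈ T, |(inner ℝ Y (v - u) : ℝ)| ≤ R) :
    ∃! ab : ℝ × ℝ,
      mv (T ∩ HLe u ab.1 ∩ HLe v ab.2) = mv T / 3 ∧
      mv (T ∩ HLe (-u) (-ab.1) ∩ HLe (v-u) (ab.2 - ab.1)) = mv T / 3 ∧
      mv (T ∩ HLe (-v) (-ab.2) ∩ HLe (-(v-u)) (ab.1 - ab.2)) = mv T / 3 := by
  obtain ⟨ab, h1, h2, h3⟩ := exists_sol hT hconv hfin hpos hu hv hw hRu hRv hRw
  refine ⟨ab, ⟨h1, h2, h3⟩, ?_⟩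
  rintro ⟨a', b'⟩ ⟨h1', h2', h3'⟩
  have := uniq hT hconv hfin hpos hu hv hw h1' h2' h3' h1 h2 h3
  exact Prod.ext this.1 this.2
end Core


lemma region_eq (S : Set E2) (g₁ g₂ : E2) (X : E2) :
    S ∩ {Y | (inner ℝ (Y - X) g₁ : ℝ) ≤ 0 ∧ (inner ℝ (Y - X) g₂ : ℝ) ≤ 0}
      = S ∩ HLe g₁ (inner ℝ X g₁ : ℝ) ∩ HLe g₂ (inner ℝ X g₂ : ℝ) := by
  ext Y
  simp only [mem_inter_iff, mem_setOf_eq, mem_HLe, inner_sub_left, sub_nonpos, and_assoc]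

end SteinAux

open SteinAux

theorem existsUnique_equal_areas_point (A B C : EuclideanSpace ℝ (Fin 2))
    (h : AffineIndependent ℝ ![A, B, C]) :
    ∃! X₀ : EuclideanSpace ℝ (Fin 2), sP A B C X₀ = triArea A B C / 3 ∧ sP B A C X₀ = triArea A B C / 3 ∧ sP C A B X₀ = triArea A B C / 3 := by
  classical
  set T : Set E2 := tri A B C with hTdef
  set u : E2 := B - A with hudef
  set v : E2 := C - A with hvdef
  -- basic nonzero facts
  have hinj := h.injective
  have hAB : A ≠ B := by
    have := hinj.ne (show (0 : Fin 3) ≠ 1 by decide); simpa using this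
  have hAC : A ≠ C := by
    have := hinj.ne (show (0 : Fin 3) ≠ 2 by decide); simpa using this
  have hBC : B ≠ C := by
    have := hinj.ne (show (1 : Fin 3) ≠ 2 by decide); simpa using this
  have hu : u ≠ 0 := sub_ne_zero_of_ne (Ne.symm hAB)
  have hv : v ≠ 0 := sub_ne_zero_of_ne (Ne.symm hAC)
  have hwvec : v - u = C - B := by rw [hudef, hvdef]; exact sub_sub_sub_cancel_right C B A
  have hw : v - u ≠ 0 := by rw [hwvec]; exact sub_ne_zero_of_ne (Ne.symm hBC)
  -- compactness etc.
  have hfinset : ({A, B, C} : Set E2).Finite := by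
    apply Set.Finite.insert; apply Set.Finite.insert; exact Set.finite_singleton C
  have hTcomp : IsCompact T := hfinset.isCompact_convexHull ℝ
  have hTmeas : MeasurableSet T := hTcomp.isClosed.measurableSet
  have hTconv : Convex ℝ T := convex_convexHull ℝ _
  have hTfin : volume T ≠ ⊤ := hTcomp.measure_lt_top.ne
  -- affine span is top
  have hrange : Set.range ![A, B, C] = ({A, B, C} : Set E2) := by
    ext Y
    simp [Fin.exists_fin_succ, Matrix.cons_val_zero, Matrix.cons_val_one]
    tauto
  have haff : affineSpan ℝ ({A, B, C} : Set E2) = ⊤ := by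
    rw [← hrange]
    rw [h.affineSpan_eq_top_iff_card_eq_finrank_add_one]
    simp [finrank_euclideanSpace_fin]
  have hint : (interior T).Nonempty := by
    rw [hTconv.interior_nonempty_iff_affineSpan_eq_top, hTdef, tri, affineSpan_convexHull]
    exact haff
  have hTpos : volume T ≠ 0 := by
    obtain ⟨x, hx⟩ := hint
    have := isOpen_interior.measure_pos (μ := volume) ⟨x, hx⟩
    exact fun h0 => absurd (measure_mono_null interior_subset h0)
      (ne_of_gt this)
  -- bounds
  obtain ⟨r, hr⟩ := hTcomp.isBounded.subset_closedBall (0 : E2)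
  have hnorm : ∀ Y ∈ T, ‖Y‖ ≤ r := by
    intro Y hY
    have := hr hY
    rwa [Metric.mem_closedBall, dist_zero_right] at this
  have hr0 : 0 ≤ r := by
    obtain ⟨x, hx⟩ := hint
    exact le_trans (norm_nonneg x) (hnorm x (interior_subset hx))
  set R : ℝ := r * (‖u‖ + ‖v‖ + ‖v - u‖) with hRdef
  have hbound : ∀ g : E2, ‖g‖ ≤ ‖u‖ + ‖v‖ + ‖v - u‖ → ∀ Y ∈ T, |(inner ℝ Y g : ℝ)| ≤ R := by
    intro g hg Y hY
    calc |(inner ℝ Y g : ℝ)| ≤ ‖Y‖ * ‖g‖ := abs_real_inner_le_norm Y g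
      _ ≤ r * (‖u‖ + ‖v‖ + ‖v - u‖) := by
          apply mul_le_mul (hnorm Y hY) hg (norm_nonneg g) hr0
  have hRu : ∀ Y ∈ T, |(inner ℝ Y u : ℝ)| ≤ R :=
    hbound u (by linarith [norm_nonneg v, norm_nonneg (v - u)]) 
  have hRv : ∀ Y ∈ T, |(inner ℝ Y v : ℝ)| ≤ R :=
    hbound v (by linarith [norm_nonneg u, norm_nonneg (v - u)])
  have hRw : ∀ Y ∈ T, |(inner ℝ Y (v - u) : ℝ)| ≤ R :=
    hbound (v - u) (by linarith [norm_nonneg u, norm_nonneg v])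
  -- the linear map X ↦ (⟪X,u⟫, ⟪X,v⟫) is bijective
  set L : E2 →ₗ[ℝ] ℝ × ℝ := (ipl u).prod (ipl v) with hLdef
  have hLinj : Function.Injective L := by
    rw [← LinearMap.ker_eq_bot]
    rw [Submodule.eq_bot_iff]
    intro x hx
    rw [LinearMap.mem_ker] at hx
    have hxu : (inner ℝ x u : ℝ) = 0 := congrArg Prod.fst hx
    have hxv : (inner ℝ x v : ℝ) = 0 := congrArg Prod.snd hx
    -- span {u, v} = ⊤
    have hspan : Submodule.span ℝ ({u, v} : Set E2) = ⊤ := by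
      have hvs : vectorSpan ℝ ({A, B, C} : Set E2) = ⊤ := by
        exact AffineSubspace.vectorSpan_eq_top_of_affineSpan_eq_top ℝ E2 E2 haff
      rw [eq_top_iff, ← hvs, vectorSpan_def]
      apply Submodule.span_le.mpr
      rintro z hz
      rw [Set.mem_vsub] at hz
      obtain ⟨p, hp, q, hq, rfl⟩ := hz
      have hmemu : u ∈ Submodule.span ℝ ({u, v} : Set E2) :=
        Submodule.subset_span (Or.inl rfl)
      have hmemv : v ∈ Submodule.span ℝ ({u, v} : Set E2) :=
        Submodule.subset_span (Or.inr rfl)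
      simp only [Set.mem_insert_iff, Set.mem_singleton_iff] at hp hq
      rcases hp with h₁ | h₁ | h₁ <;> rcases hq with h₂ | h₂ | h₂ <;> rw [h₁, h₂] <;>
        simp only [vsub_eq_sub]
      · simpa using Submodule.zero_mem _
      · rw [show A - B = -u from by rw [hudef]; exact (neg_sub B A).symm]
        exact Submodule.neg_mem _ hmemu
      · rw [show A - C = -v from by rw [hvdef]; exact (neg_sub C A).symm]
        exact Submodule.neg_mem _ hmemv
      · rw [show B - A = u from by rw [hudef]]
        exact hmemu
      · simpa using Submodule.zero_mem _
      · rw [show B - C = u - v from by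
          rw [hudef, hvdef]; exact (sub_sub_sub_cancel_right B C A).symm]
        exact Submodule.sub_mem _ hmemu hmemv
      · rw [show C - A = v from by rw [hvdef]]
        exact hmemv
      · rw [show C - B = v - u from by
          rw [hudef, hvdef]; exact (sub_sub_sub_cancel_right C B A).symm]
        exact Submodule.sub_mem _ hmemv hmemu
      · simpa using Submodule.zero_mem _
    have hxx : x ∈ Submodule.span ℝ ({u, v} : Set E2) := by rw [hspan]; exact Submodule.mem_top
    have hzero : ∀ y ∈ Submodule.span ℝ ({u, v} : Set E2), (inner ℝ x y : ℝ) = 0 := by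
      intro y hy
      induction hy using Submodule.span_induction with
      | mem z hz => rcases hz with rfl | rfl; exacts [hxu, hxv]
      | zero => simp
      | add _ _ _ _ h1 h2 => rw [inner_add_right, h1, h2]; ring
      | smul a _ _ h1 => rw [real_inner_smul_right, h1]; ring
    have := hzero x hxx
    exact inner_self_eq_zero.mp this
  have hLsurj : Function.Surjective L := by
    have hdim : Module.finrank ℝ E2 = Module.finrank ℝ (ℝ × ℝ) := by
      simp [finrank_euclideanSpace_fin]
    exact (LinearMap.injective_iff_surjective_of_finrank_eq_finrank hdim).mp hLinj
  -- region identifications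
  have hTBAC : tri B A C = T := by rw [hTdef]; unfold tri; rw [Set.insert_comm]
  have hTCAB : tri C A B = T := by
    rw [hTdef]; unfold tri
    rw [show ({C, A, B} : Set E2) = {A, B, C} from by
      rw [Set.insert_comm]; rw [Set.pair_comm C B]]
  have hregA : ∀ X : E2, steinRegion A B C X
      = T ∩ HLe u (inner ℝ X u : ℝ) ∩ HLe v (inner ℝ X v : ℝ) := by
    intro X
    unfold steinRegion
    rw [← hudef, ← hvdef, ← hTdef, region_eq]
  have hregB : ∀ X : E2, steinRegion B A C X
      = T ∩ HLe (-u) (-(inner ℝ X u : ℝ)) ∩ HLe (v - u) ((inner ℝ X v : ℝ) - (inner ℝ X u : ℝ)) := by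
    intro X
    unfold steinRegion
    rw [hTBAC, region_eq]
    rw [show A - B = -u from by rw [hudef]; exact (neg_sub B A).symm,
      show C - B = v - u from by
        rw [hudef, hvdef]; exact (sub_sub_sub_cancel_right C B A).symm]
    rw [show (inner ℝ X (-u) : ℝ) = -(inner ℝ X u : ℝ) from inner_neg_right X u,
      show (inner ℝ X (v - u) : ℝ) = (inner ℝ X v : ℝ) - (inner ℝ X u : ℝ) from inner_sub_right X v u]
  have hregC : ∀ X : E2, steinRegion C A B X
      = T ∩ HLe (-v) (-(inner ℝ X v : ℝ)) ∩ HLe (-(v - u)) ((inner ℝ X u : ℝ) - (inner ℝ X v : ℝ)) := by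
    intro X
    unfold steinRegion
    rw [hTCAB, region_eq]
    rw [show A - C = -v from by rw [hvdef]; exact (neg_sub C A).symm,
      show B - C = -(v - u) from by
        rw [hudef, hvdef, neg_sub]; exact (sub_sub_sub_cancel_right B C A).symm]
    rw [show (inner ℝ X (-v) : ℝ) = -(inner ℝ X v : ℝ) from inner_neg_right X v,
      show (inner ℝ X (-(v-u)) : ℝ) = (inner ℝ X u : ℝ) - (inner ℝ X v : ℝ) from by
        rw [inner_neg_right, inner_sub_right]; ring]
  have htriArea : triArea A B C = mv T := rfl
  have hsPdef : ∀ A' B' C' X : E2, sP A' B' C' X = mv (steinRegion A' B' C' X) := fun _ _ _ _ => rfl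
  -- apply the core theorem
  obtain ⟨ab, ⟨h1, h2, h3⟩, habuniq⟩ :=
    core_existsUnique hTmeas hTconv hTfin hTpos hu hv hw hRu hRv hRw
  obtain ⟨X₀, hX₀⟩ := hLsurj ab
  have hX₀1 : (inner ℝ X₀ u : ℝ) = ab.1 := congrArg Prod.fst hX₀
  have hX₀2 : (inner ℝ X₀ v : ℝ) = ab.2 := congrArg Prod.snd hX₀
  refine ⟨X₀, ⟨?_, ?_, ?_⟩, ?_⟩
  · rw [hsPdef, hregA, hX₀1, hX₀2, htriArea]; exact h1
  · rw [hsPdef, hregB, hX₀1, hX₀2, htriArea]; exact h2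
  · rw [hsPdef, hregC, hX₀1, hX₀2, htriArea]; exact h3
  · intro X' ⟨k1, k2, k3⟩
    rw [hsPdef, hregA, htriArea] at k1
    rw [hsPdef, hregB, htriArea] at k2
    rw [hsPdef, hregC, htriArea] at k3
    have : ((inner ℝ X' u : ℝ), (inner ℝ X' v : ℝ)) = ab := habuniq _ ⟨k1, k2, k3⟩
    apply hLinj
    rw [hX₀]
    exact this
end

section
/- Suppose a triangle T ⊂ ℝ² is covered by three closed sets R_A, R_B, R_C such that R_A is disjoint from side BC, R_B is disjoint from side CA, and R_C is disjoint from side AB. Then R_A ∩ R_B ∩ R_C ≠ ∅. -/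
open MeasureTheory Real EuclideanGeometry
open scoped RealInnerProductSpace

/-!
Label each point of the grid of mesh `1/n` on the triangle by a set `R_v` containing it. The
side conditions make this a Sperner labelling, so some grid cell sees all three labels: there are
points of `R_A`, `R_B`, `R_C` within `O(1/n)` of each other. Letting `n → ∞`, the Lebesgue number
lemma on the compact triangle rules out `R_A ∩ R_B ∩ R_C = ∅`.

Sperner's lemma is proved by the signed count of `(0,1)`-edges: its sum around a cell is `±1` for
a rainbow cell and `0` otherwise, and summed over the cells between two consecutive grid rows it
is the difference of the counts along these rows, because the slanted ends lie on the sides `CA`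
and `BC` where the labels `1`, resp. `0`, are missing. The bottom row, on side `AB`, runs from
label `0` to label `1` with no label `2`, so its count is `1`, whereas the top row is empty.
-/

open Finset Metric

def spernerSign : Fin 3 → Fin 3 → ℤ
  | 0, 1 => 1
  | 1, 0 => -1
  | _, _ => 0

lemma spernerSign_swap (a b : Fin 3) : spernerSign b a = -spernerSign a b := by
  revert a b; decide

lemma spernerSign_cycle_eq_zero {a b c v : Fin 3} (ha : a ≠ v) (hb : b ≠ v) (hc : c ≠ v) :
    spernerSign a b + spernerSign b c + spernerSign c a = 0 := by
  revert a b c v; decide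

lemma spernerSign_eq_zero_of_ne_zero {a b : Fin 3} (ha : a ≠ 0) (hb : b ≠ 0) :
    spernerSign a b = 0 := by
  revert a b; decide

lemma spernerSign_eq_zero_of_ne_one {a b : Fin 3} (ha : a ≠ 1) (hb : b ≠ 1) :
    spernerSign a b = 0 := by
  revert a b; decide

lemma spernerSign_eq_sub_of_ne_two {a b : Fin 3} (ha : a ≠ 2) (hb : b ≠ 2) :
    spernerSign a b = (if b = 1 then 1 else 0) - (if a = 1 then 1 else 0) := by
  revert a b; decide

/-- With `a` the lower and `b` the upper row of a strip of the triangular grid, the two sums run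
over its upward and downward cells, each traversed counterclockwise. -/
theorem sum_cycles_strip {α M : Type*} [AddCommGroup M] (g : α → α → M)
    (hg : ∀ x y, g y x = -g x y) (a b : ℕ → α) (m : ℕ) :
    ∑ i ∈ range (m + 1), (g (a i) (a (i + 1)) + g (a (i + 1)) (b i) + g (b i) (a i)) +
      ∑ i ∈ range m, (g (a (i + 1)) (b (i + 1)) + g (b (i + 1)) (b i) + g (b i) (a (i + 1))) =
    ∑ i ∈ range (m + 1), g (a i) (a (i + 1)) - ∑ i ∈ range m, g (b i) (b (i + 1)) +
      g (b 0) (a 0) + g (a (m + 1)) (b m) := by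
  induction m with
  | zero => simp only [zero_add, sum_range_one, range_zero, sum_empty]; abel
  | succ m ih =>
    simp only [sum_range_succ] at ih ⊢
    linear_combination (norm := abel) ih + hg (b (m + 1)) (b m) + hg (a (m + 1)) (b m) +
      hg (b (m + 1)) (a (m + 1))

def rowSign (ℓ : ℕ → ℕ → Fin 3) (n j : ℕ) : ℤ :=
  ∑ i ∈ range (n - j), spernerSign (ℓ i j) (ℓ (i + 1) j)

section Sperner

variable {n : ℕ} {ℓ : ℕ → ℕ → Fin 3}

lemma rowSign_zero (hBC : ∀ i j, i + j = n → ℓ i j ≠ 0)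
    (hCA : ∀ j ≤ n, ℓ 0 j ≠ 1) (hAB : ∀ i ≤ n, ℓ i 0 ≠ 2) : rowSign ℓ n 0 = 1 := by
  have hA : ℓ 0 0 = 0 := by
    have := hCA 0 (Nat.zero_le n); have := hAB 0 (Nat.zero_le n); omega
  have hB : ℓ n 0 = 1 := by
    have := hBC n 0 rfl; have := hAB n le_rfl; omega
  have hstep : ∀ i ∈ range n, spernerSign (ℓ i 0) (ℓ (i + 1) 0) =
      (if ℓ (i + 1) 0 = 1 then 1 else 0) - (if ℓ i 0 = 1 then 1 else 0) := fun i hi =>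
    have := mem_range.1 hi
    spernerSign_eq_sub_of_ne_two (hAB i (by omega)) (hAB (i + 1) (by omega))
  rw [rowSign, Nat.sub_zero, sum_congr rfl hstep,
    sum_range_sub (fun i => if ℓ i 0 = 1 then (1 : ℤ) else 0), hA, hB]
  rfl

lemma rowSign_succ (hBC : ∀ i j, i + j = n → ℓ i j ≠ 0) (hCA : ∀ j ≤ n, ℓ 0 j ≠ 1) {j : ℕ}
    (hj : j < n)
    (hrow : ∀ i, ∃ v, ∀ a ≤ 1, ∀ b ≤ 1, i + a + (j + b) ≤ n → ℓ (i + a) (j + b) ≠ v) :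
    rowSign ℓ n (j + 1) = rowSign ℓ n j := by
  obtain ⟨m, hm⟩ : ∃ m, n - j = m + 1 := ⟨n - j - 1, by omega⟩
  have key := sum_cycles_strip spernerSign spernerSign_swap (ℓ · j) (ℓ · (j + 1)) m
  have hup : ∀ i ∈ range (m + 1), spernerSign (ℓ i j) (ℓ (i + 1) j) +
      spernerSign (ℓ (i + 1) j) (ℓ i (j + 1)) + spernerSign (ℓ i (j + 1)) (ℓ i j) = 0 := by
    intro i hi
    simp only [mem_range] at hi
    obtain ⟨v, hv⟩ := hrow i
    exact spernerSign_cycle_eq_zero (hv 0 (by omega) 0 (by omega) (by omega))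
      (hv 1 le_rfl 0 (by omega) (by omega)) (hv 0 (by omega) 1 le_rfl (by omega))
  have hdown : ∀ i ∈ range m, spernerSign (ℓ (i + 1) j) (ℓ (i + 1) (j + 1)) +
      spernerSign (ℓ (i + 1) (j + 1)) (ℓ i (j + 1)) +
        spernerSign (ℓ i (j + 1)) (ℓ (i + 1) j) = 0 := by
    intro i hi
    simp only [mem_range] at hi
    obtain ⟨v, hv⟩ := hrow i
    exact spernerSign_cycle_eq_zero (hv 1 le_rfl 0 (by omega) (by omega))
      (hv 1 le_rfl 1 le_rfl (by omega)) (hv 0 (by omega) 1 le_rfl (by omega))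
  have hleft : spernerSign (ℓ 0 (j + 1)) (ℓ 0 j) = 0 :=
    spernerSign_eq_zero_of_ne_one (hCA _ hj) (hCA _ hj.le)
  have hright : spernerSign (ℓ (m + 1) j) (ℓ m (j + 1)) = 0 :=
    spernerSign_eq_zero_of_ne_zero (hBC _ _ (by omega)) (hBC _ _ (by omega))
  rw [sum_eq_zero hup, sum_eq_zero hdown, hleft, hright] at key
  have hm' : n - (j + 1) = m := by omega
  rw [rowSign, rowSign, hm, hm']
  linarith

theorem sperner_triangle (hBC : ∀ i j, i + j = n → ℓ i j ≠ 0)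
    (hCA : ∀ j ≤ n, ℓ 0 j ≠ 1) (hAB : ∀ i ≤ n, ℓ i 0 ≠ 2) :
    ∃ i j, ∀ v, ∃ a ≤ 1, ∃ b ≤ 1, i + a + (j + b) ≤ n ∧ ℓ (i + a) (j + b) = v := by
  by_contra! hcon
  have hrow : ∀ j ≤ n, rowSign ℓ n j = 1 := by
    intro j hj
    induction j with
    | zero => exact rowSign_zero hBC hCA hAB
    | succ j ih => rw [rowSign_succ hBC hCA hj (hcon · j), ih (by omega)]
  simpa [rowSign] using hrow n le_rfl

end Sperner

theorem IsCompact.exists_forall_mem_of_forall_exists_dist_lt {X ι : Type*} [PseudoMetricSpace X]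
    {K : Set X} (hK : IsCompact K) {F : ι → Set X} (hF : ∀ i, IsClosed (F i))
    (h : ∀ ε > 0, ∃ x ∈ K, ∀ i, ∃ y ∈ F i, dist x y < ε) : ∃ x ∈ K, ∀ i, x ∈ F i := by
  by_contra! hK_out
  obtain ⟨δ, hδ, hball⟩ := lebesgue_number_lemma_of_metric hK (fun i => (hF i).isOpen_compl)
    (fun x hx => by simpa using hK_out x hx)
  obtain ⟨x, hxK, hx⟩ := h δ hδ
  obtain ⟨i, hi⟩ := hball x hxK
  obtain ⟨y, hyF, hxy⟩ := hx i
  exact hi (mem_ball'.2 hxy) hyF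

section Grid

variable {E : Type*} [AddCommGroup E] [Module ℝ E] (A B C : E)

noncomputable def gridPt (n i j : ℕ) : E :=
  A + ((i : ℝ) / n) • (B - A) + ((j : ℝ) / n) • (C - A)

variable {n i j : ℕ}

lemma gridPt_mem_convexHull (hij : i + j ≤ n) :
    gridPt A B C n i j ∈ convexHull ℝ {A, B, C} := by
  have hsum : (i : ℝ) / n + j / n ≤ 1 := by
    rw [← add_div]; exact div_le_one_of_le₀ (by exact_mod_cast hij) n.cast_nonneg
  have hcomb : gridPt A B C n i j =
      ∑ k, ![1 - (i : ℝ) / n - j / n, (i : ℝ) / n, (j : ℝ) / n] k • ![A, B, C] k := by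
    simp only [gridPt, Fin.sum_univ_three, Matrix.cons_val]
    module
  rw [hcomb]
  refine (convex_convexHull ℝ _).sum_mem (fun k _ => ?_) ?_ (fun k _ => ?_)
  · fin_cases k <;> simp <;> first | positivity | linarith
  · simp only [Fin.sum_univ_three, Matrix.cons_val]; ring
  · fin_cases k <;> exact subset_convexHull ℝ _ (by simp)

lemma gridPt_mem_segment_BC (hn : 0 < n) (hij : i + j = n) :
    gridPt A B C n i j ∈ segment ℝ B C := by
  have hsum : (i : ℝ) / n + j / n = 1 := by
    rw [← add_div, div_eq_one_iff_eq (by positivity)]; exact_mod_cast hij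
  refine ⟨i / n, j / n, by positivity, by positivity, hsum, ?_⟩
  rw [gridPt, ← sub_eq_zero]
  linear_combination (norm := module) hsum • A

lemma gridPt_mem_segment_CA (hj : j ≤ n) : gridPt A B C n 0 j ∈ segment ℝ C A := by
  have hj' : (j : ℝ) / n ≤ 1 := div_le_one_of_le₀ (by exact_mod_cast hj) n.cast_nonneg
  refine ⟨j / n, 1 - j / n, by positivity, by linarith, by ring, ?_⟩
  simp only [gridPt]; module

lemma gridPt_mem_segment_AB (hi : i ≤ n) : gridPt A B C n i 0 ∈ segment ℝ A B := by
  have hi' : (i : ℝ) / n ≤ 1 := div_le_one_of_le₀ (by exact_mod_cast hi) n.cast_nonneg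
  refine ⟨1 - i / n, i / n, by linarith, by positivity, by ring, ?_⟩
  simp only [gridPt]; module

end Grid

lemma dist_gridPt_le {E : Type*} [SeminormedAddCommGroup E] [NormedSpace ℝ E] (A B C : E)
    (n i j : ℕ) {a b a' b' : ℕ}
    (ha : a ≤ 1) (hb : b ≤ 1) (ha' : a' ≤ 1) (hb' : b' ≤ 1) :
    dist (gridPt A B C n (i + a) (j + b)) (gridPt A B C n (i + a') (j + b')) ≤
      (‖B - A‖ + ‖C - A‖) / n := by
  have hdiff : gridPt A B C n (i + a) (j + b) - gridPt A B C n (i + a') (j + b') =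
      (((a : ℝ) - a') / n) • (B - A) + (((b : ℝ) - b') / n) • (C - A) := by
    simp only [gridPt]; push_cast; module
  have hcoef : ∀ x y : ℕ, x ≤ 1 → y ≤ 1 → ‖((x : ℝ) - y) / n‖ ≤ 1 / n := by
    intro x y hx hy
    rw [norm_div, Real.norm_natCast]
    gcongr
    interval_cases x <;> interval_cases y <;> norm_num
  calc dist _ _ = ‖(((a : ℝ) - a') / n) • (B - A) + (((b : ℝ) - b') / n) • (C - A)‖ := by
        rw [dist_eq_norm, hdiff]
    _ ≤ ‖((a : ℝ) - a') / n‖ * ‖B - A‖ + ‖((b : ℝ) - b') / n‖ * ‖C - A‖ := by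
        grw [norm_add_le, norm_smul, norm_smul]
    _ ≤ 1 / n * ‖B - A‖ + 1 / n * ‖C - A‖ := by
        gcongr
        exacts [hcoef a a' ha ha', hcoef b b' hb hb']
    _ = (‖B - A‖ + ‖C - A‖) / n := by ring

theorem exists_forall_exists_dist_le_of_sperner_cover {E : Type*} [SeminormedAddCommGroup E]
    [NormedSpace ℝ E] {A B C : E} {F : Fin 3 → Set E}
    (hcover : ∀ p ∈ convexHull ℝ {A, B, C}, ∃ v, p ∈ F v) (hBC : F 0 ∩ segment ℝ B C = ∅)
    (hCA : F 1 ∩ segment ℝ C A = ∅) (hAB : F 2 ∩ segment ℝ A B = ∅) {n : ℕ} (hn : 0 < n) :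
    ∃ x ∈ convexHull ℝ {A, B, C}, ∀ v, ∃ y ∈ F v, dist x y ≤ (‖B - A‖ + ‖C - A‖) / n := by
  choose! label hlabel using hcover
  set ℓ : ℕ → ℕ → Fin 3 := fun i j => label (gridPt A B C n i j)
  have hmem : ∀ {i j v}, i + j ≤ n → ℓ i j = v → gridPt A B C n i j ∈ F v := fun hij hv =>
    hv ▸ hlabel _ (gridPt_mem_convexHull A B C hij)
  obtain ⟨i, j, hcell⟩ := sperner_triangle (ℓ := ℓ)
    (fun i j hij h0 => hBC.subset ⟨hmem hij.le h0, gridPt_mem_segment_BC A B C hn hij⟩)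
    (fun j hj h1 => hCA.subset ⟨hmem (by omega) h1, gridPt_mem_segment_CA A B C hj⟩)
    (fun i hi h2 => hAB.subset ⟨hmem (by omega) h2, gridPt_mem_segment_AB A B C hi⟩)
  obtain ⟨a, ha, b, hb, hab, -⟩ := hcell 0
  refine ⟨gridPt A B C n (i + a) (j + b), gridPt_mem_convexHull A B C hab, fun v => ?_⟩
  obtain ⟨a', ha', b', hb', hab', hv⟩ := hcell v
  exact ⟨_, hmem hab' hv, dist_gridPt_le A B C n i j ha hb ha' hb'⟩

theorem kkm_triangle_general (A B C : EuclideanSpace ℝ (Fin 2))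
    (RA RB RC : Set (EuclideanSpace ℝ (Fin 2)))
    (hcA : IsClosed RA) (hcB : IsClosed RB) (hcC : IsClosed RC)
    (hcover : tri A B C ⊆ RA ∪ RB ∪ RC)
    (hdA : RA ∩ segment ℝ B C = ∅)
    (hdB : RB ∩ segment ℝ C A = ∅)
    (hdC : RC ∩ segment ℝ A B = ∅) :
    (RA ∩ RB ∩ RC).Nonempty := by
  set F : Fin 3 → Set (EuclideanSpace ℝ (Fin 2)) := ![RA, RB, RC]
  have hcoverF : ∀ p ∈ tri A B C, ∃ v, p ∈ F v := fun p hp => by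
    rcases hcover hp with (h | h) | h
    exacts [⟨0, h⟩, ⟨1, h⟩, ⟨2, h⟩]
  have hclosed : ∀ v, IsClosed (F v) := by simp [F, Fin.forall_fin_succ, hcA, hcB, hcC]
  have hnear : ∀ ε > 0, ∃ x ∈ tri A B C, ∀ v, ∃ y ∈ F v, dist x y < ε := by
    intro ε hε
    obtain ⟨n, hn⟩ := exists_nat_gt ((‖B - A‖ + ‖C - A‖) / ε)
    have hn0 : (0 : ℝ) < n := lt_of_le_of_lt (by positivity) hn
    obtain ⟨x, hxT, hx⟩ := exists_forall_exists_dist_le_of_sperner_cover hcoverF hdA hdB hdC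
      (n := n) (by exact_mod_cast hn0)
    refine ⟨x, hxT, fun v => ?_⟩
    obtain ⟨y, hy, hxy⟩ := hx v
    refine ⟨y, hy, hxy.trans_lt ?_⟩
    rw [div_lt_iff₀ hε] at hn
    rw [div_lt_iff₀ hn0]
    linarith
  have hT : IsCompact (tri A B C) := (Set.toFinite _).isCompact_convexHull (𝕜 := ℝ)
  obtain ⟨x, -, hx⟩ := hT.exists_forall_mem_of_forall_exists_dist_lt hclosed hnear
  exact ⟨x, ⟨hx 0, hx 1⟩, hx 2⟩

theorem kkm_triangle (A B C : EuclideanSpace ℝ (Fin 2))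
    (h : AffineIndependent ℝ ![A, B, C])
    (RA RB RC : Set (EuclideanSpace ℝ (Fin 2)))
    (hcA : IsClosed RA) (hcB : IsClosed RB) (hcC : IsClosed RC)
    (hcover : tri A B C ⊆ RA ∪ RB ∪ RC)
    (hdA : RA ∩ segment ℝ B C = ∅)
    (hdB : RB ∩ segment ℝ C A = ∅)
    (hdC : RC ∩ segment ℝ A B = ∅) :
    (RA ∩ RB ∩ RC).Nonempty :=
  kkm_triangle_general A B C RA RB RC hcA hcB hcC hcover hdA hdB hdC
end

section
/- For positive reals a = tan A and b = tan B with A, B ∈ (0, π/2) and A + B < π/2, the inequality √((1+a²)·b) + √((1+b²)·a) < √(3·(a+b)) can hold; specifically, there exist angles A, B with A + B < π/2 for which the strict inequality holds (e.g., A and B both sufficiently small), and for all A, B with A + B ≥ π/2 within (0, π/2) the reverse strict inequality √((1+a²)·b) + √((1+b²)·a) > √(3·(a+b)) holds. -/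
open MeasureTheory Real EuclideanGeometry
open scoped RealInnerProductSpace

/-!
If `A + B ≥ π/2` then `cos (A + B) ≤ 0`, i.e. `tan A * tan B ≥ 1`. For such `a, b > 0`,
the identity `(1 + a²)(1 + b²) = (a + b)² + (ab - 1)²` gives
`√((1 + a²) b) * √((1 + b²) a) ≥ a + b`, and squaring the right-hand side yields
`(1 + a²) b + (1 + b²) a + 2 (a + b) ≥ 4 (a + b) > 3 (a + b)`.
For the obtuse case `A = B = arctan (1/2)` is a witness: `2 √(5/8) < √3`.
-/

theorem one_le_tan_mul_tan {A B : ℝ} (hA : A < π / 2) (hB : B < π / 2) (hAB : π / 2 ≤ A + B) :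
    1 ≤ tan A * tan B := by
  have hcosA : 0 < cos A := cos_pos_of_mem_Ioo ⟨by linarith, hA⟩
  have hcosB : 0 < cos B := cos_pos_of_mem_Ioo ⟨by linarith, hB⟩
  have hcosAB : cos (A + B) ≤ 0 := cos_nonpos_of_pi_div_two_le_of_le hAB (by linarith)
  rw [cos_add] at hcosAB
  rw [tan_eq_sin_div_cos, tan_eq_sin_div_cos, div_mul_div_comm, one_le_div (by positivity)]
  linarith

theorem add_sq_le_one_add_sq_mul_one_add_sq (a b : ℝ) : (a + b) ^ 2 ≤ (1 + a ^ 2) * (1 + b ^ 2) := by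
  nlinarith [sq_nonneg (a * b - 1)]

theorem sqrt_three_mul_add_lt_sqrt_add_sqrt {a b : ℝ} (ha : 0 ≤ a) (hb : 0 ≤ b)
    (hab : 1 ≤ a * b) :
    √(3 * (a + b)) < √((1 + a ^ 2) * b) + √((1 + b ^ 2) * a) := by
  have hsum : 0 < a + b := by nlinarith
  have hprod : a + b ≤ √((1 + a ^ 2) * b) * √((1 + b ^ 2) * a) := by
    rw [← sqrt_mul (by positivity), le_sqrt hsum.le (by positivity)]
    calc (a + b) ^ 2 ≤ (1 + a ^ 2) * (1 + b ^ 2) := add_sq_le_one_add_sq_mul_one_add_sq a b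
      _ ≤ a * b * ((1 + a ^ 2) * (1 + b ^ 2)) := le_mul_of_one_le_left (by positivity) hab
      _ = (1 + a ^ 2) * b * ((1 + b ^ 2) * a) := by ring
  refine lt_of_pow_lt_pow_left₀ 2 (by positivity) ?_
  rw [sq_sqrt (by positivity)]
  nlinarith [sq_sqrt (show 0 ≤ (1 + a ^ 2) * b by positivity),
    sq_sqrt (show 0 ≤ (1 + b ^ 2) * a by positivity), mul_le_mul_of_nonneg_right hab hsum.le]

theorem tan_inequality_dichotomy :
    (∃ A B : ℝ, 0 < A ∧ 0 < B ∧ A + B < π/2 ∧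
      Real.sqrt ((1 + Real.tan A ^ 2) * Real.tan B) +
        Real.sqrt ((1 + Real.tan B ^ 2) * Real.tan A) <
        Real.sqrt (3 * (Real.tan A + Real.tan B))) ∧
    (∀ A B : ℝ, 0 < A → A < π/2 → 0 < B → B < π/2 → π/2 ≤ A + B →
      Real.sqrt (3 * (Real.tan A + Real.tan B)) <
        Real.sqrt ((1 + Real.tan A ^ 2) * Real.tan B) +
          Real.sqrt ((1 + Real.tan B ^ 2) * Real.tan A)) := by
  refine ⟨⟨arctan (1 / 2), arctan (1 / 2), arctan_pos.2 (by norm_num), arctan_pos.2 (by norm_num),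
    ?_, ?_⟩, fun A B hA hA' hB hB' hAB => ?_⟩
  · have : arctan (1 / 2) < π / 4 := arctan_one ▸ arctan_strictMono (by norm_num)
    linarith
  · rw [tan_arctan, ← two_mul, lt_sqrt (by positivity), mul_pow, sq_sqrt (by positivity)]
    norm_num
  · have htanA : 0 < tan A := tan_pos_of_pos_of_lt_pi_div_two hA hA'
    have htanB : 0 < tan B := tan_pos_of_pos_of_lt_pi_div_two hB hB'
    exact sqrt_three_mul_add_lt_sqrt_add_sqrt htanA.le htanB.le (one_le_tan_mul_tan hA' hB' hAB)
end
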